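/- arXiv:1305.5219 — 10 statements merged into one kernel-verified Lean document; each statement's English description precedes it below -/
import Mathlib

section
/- For every t > 0 one has W(t) > ⟨W⟩_t, where ⟨W⟩_t = (1/t)·∫₀^t W(τ) dτ. (Part (i) of the lemma on the iteration class 𝒲.) -/
/-!
Up to the time `t₀` where `W` is strictly increasing, `W t` dominates every earlier value, hence
its own average. After `t₀`, the lower envelope `W ≤ V∞ - γ h` bounds the average of `W` by
`V∞ - γ ⟨h⟩_t`, the upper envelope gives `W t > V∞ - γ g t`, and `⟨h⟩_t > g t` separates the two.
-/

open Set intervalIntegral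

theorem integral_lt_mul_of_strictMonoOn {f : ℝ → ℝ} {a b : ℝ} (hab : a < b)
    (hf : StrictMonoOn f (Icc a b)) : ∫ x in a..b, f x < (b - a) * f b := by
  have hf_int : IntervalIntegrable f MeasureTheory.volume a b :=
    (hf.monotoneOn.mono (uIcc_of_le hab.le).subset).intervalIntegrable
  have hgap : 0 < ∫ x in a..b, (f b - f x) :=
    intervalIntegral_pos_of_pos_on (intervalIntegrable_const.sub hf_int)
      (fun x hx => sub_pos.2 <| hf (Ioo_subset_Icc_self hx) (right_mem_Icc.2 hab.le) hx.2) hab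
  rw [integral_sub intervalIntegrable_const hf_int, integral_const, smul_eq_mul] at hgap
  linarith

theorem integral_le_of_le_sub_mul {f φ : ℝ → ℝ} {a b c γ : ℝ} (hab : a ≤ b)
    (hf : IntervalIntegrable f MeasureTheory.volume a b)
    (hφ : IntervalIntegrable φ MeasureTheory.volume a b)
    (hle : ∀ x ∈ Icc a b, f x ≤ c - γ * φ x) :
    ∫ x in a..b, f x ≤ (b - a) * c - γ * ∫ x in a..b, φ x := by
  calc ∫ x in a..b, f x ≤ ∫ x in a..b, (c - γ * φ x) :=
        integral_mono_on hab hf (intervalIntegrable_const.sub (hφ.const_mul γ)) hle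
    _ = (b - a) * c - γ * ∫ x in a..b, φ x := by
        rw [integral_sub intervalIntegrable_const (hφ.const_mul γ), integral_const,
          integral_const_mul, smul_eq_mul]

theorem iteration_class_avg_lt_general
    (Vinf γ t₀ : ℝ) (hγ : 0 < γ)
    (h g W : ℝ → ℝ)
    (hh_cont : ContinuousOn h (Ici 0))
    (hW_lip : ∃ L : NNReal, LipschitzWith L W)
    (hW_mono : StrictMonoOn W (Icc 0 t₀))
    (hW_env : ∀ t ≥ (0:ℝ), γ * h t ≤ Vinf - W t ∧ Vinf - W t < γ * g t)
    (havg : ∀ t ≥ t₀, g t < (1 / t) * ∫ τ in (0:ℝ)..t, h τ) :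
    ∀ t > (0:ℝ), (1 / t) * ∫ τ in (0:ℝ)..t, W τ < W t := by
  intro t ht
  rw [one_div_mul_eq_div, div_lt_iff₀' ht]
  rcases le_or_gt t t₀ with hle | hgt
  · simpa using integral_lt_mul_of_strictMonoOn ht (hW_mono.mono (Icc_subset_Icc_right hle))
  · obtain ⟨L, hL⟩ := hW_lip
    have hh_int : IntervalIntegrable h MeasureTheory.volume 0 t :=
      (hh_cont.mono fun x hx => (uIcc_of_le ht.le ▸ hx).1).intervalIntegrable
    have hW_avg : ∫ τ in (0:ℝ)..t, W τ ≤ t * Vinf - γ * ∫ τ in (0:ℝ)..t, h τ := by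
      simpa using integral_le_of_le_sub_mul ht.le (hL.continuous.intervalIntegrable 0 t) hh_int
        fun x hx => by linarith [(hW_env x hx.1).1]
    have hh_avg : t * g t < ∫ τ in (0:ℝ)..t, h τ := by
      simpa only [one_div_mul_eq_div, lt_div_iff₀' ht] using havg t hgt.le
    linarith [mul_lt_mul_of_pos_left (hW_env t ht.le).2 ht, mul_lt_mul_of_pos_left hh_avg hγ]

/-- Part (i) of the lemma on the iteration class 𝒲: for every `t > 0`,
`W t` exceeds its average `⟨W⟩_t = (1/t) ∫₀ᵗ W`. -/
theorem iteration_class_avg_lt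
    (Vinf γ t₀ : ℝ) (hγ : 0 < γ) (ht₀ : 0 < t₀)
    (h g W : ℝ → ℝ)
    (hh_cont : ContinuousOn h (Ici 0)) (hg_cont : ContinuousOn g (Ici 0))
    (hh_bdd : ∃ Ch, ∀ t ≥ (0:ℝ), |h t| ≤ Ch)
    (hg_bdd : ∃ Cg, ∀ t ≥ (0:ℝ), |g t| ≤ Cg)
    (hh_pos : ∀ t ≥ (0:ℝ), 0 < h t)
    (hW_lip : ∃ L : NNReal, LipschitzWith L W)
    (hW0 : W 0 = Vinf - γ)
    (hW_mono : StrictMonoOn W (Icc 0 t₀))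
    (hW_env : ∀ t ≥ (0:ℝ), γ * h t ≤ Vinf - W t ∧ Vinf - W t < γ * g t)
    (havg : ∀ t ≥ t₀, g t < (1 / t) * ∫ τ in (0:ℝ)..t, h τ) :
    ∀ t > (0:ℝ), (1 / t) * ∫ τ in (0:ℝ)..t, W τ < W t :=
  iteration_class_avg_lt_general Vinf γ t₀ hγ h g W hh_cont hW_lip hW_mono hW_env havg
end

section
/- For all 0 < s < t one has ⟨W⟩_{s,t} > ⟨W⟩_t, i.e. the average of W over [s,t] strictly exceeds the average of W over [0,t]. (Part (iii) of the lemma on the iteration class 𝒲.) -/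
open Set intervalIntegral

/-! The running average `⟨W⟩_τ` stays strictly below `W τ` for every `τ > 0`: on `[0, t₀]` because
`W` is strictly increasing there, and beyond `t₀` because the envelope gives
`⟨V∞ - W⟩_τ ≥ γ ⟨h⟩_τ > γ g τ > V∞ - W τ`. As `d/dτ ⟨W⟩_τ = (W τ - ⟨W⟩_τ) / τ`, the running average
is strictly increasing, and `⟨W⟩_t` is a convex combination of `⟨W⟩_s < ⟨W⟩_t` and `⟨W⟩_{s,t}`. -/

section RunningAverage

variable {f : ℝ → ℝ} {a b : ℝ}

theorem interval_average_lt_of_strictMonoOn (hab : a < b) (hf : StrictMonoOn f (Icc a b)) :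
    ⨍ x in a..b, f x < f b := by
  have hint : IntervalIntegrable f MeasureTheory.volume a b :=
    MonotoneOn.intervalIntegrable (by rw [uIcc_of_le hab.le]; exact hf.monotoneOn)
  have hpos : 0 < ∫ x in a..b, (f b - f x) :=
    intervalIntegral_pos_of_pos_on (intervalIntegrable_const.sub hint)
      (fun x hx => sub_pos.2 (hf ⟨hx.1.le, hx.2.le⟩ ⟨hab.le, le_rfl⟩ hx.2)) hab
  rw [integral_sub intervalIntegrable_const hint, integral_const, smul_eq_mul] at hpos
  rw [interval_average_eq_div, div_lt_iff₀ (sub_pos.2 hab)]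
  linarith

theorem interval_average_lt_of_envelope {h g W : ℝ → ℝ} {V γ : ℝ} (hγ : 0 < γ) (hab : a < b)
    (hh : IntervalIntegrable h MeasureTheory.volume a b)
    (hW : IntervalIntegrable W MeasureTheory.volume a b)
    (hlower : ∀ x ∈ Icc a b, γ * h x ≤ V - W x) (hupper : V - W b < γ * g b)
    (havg : g b < ⨍ x in a..b, h x) :
    ⨍ x in a..b, W x < W b := by
  have hba : 0 < b - a := sub_pos.2 hab
  have hmono : γ * ∫ x in a..b, h x ≤ (b - a) * V - ∫ x in a..b, W x := by
    rw [← integral_const_mul, ← smul_eq_mul, ← integral_const, ← integral_sub intervalIntegrable_const hW]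
    exact integral_mono_on hab.le (hh.const_mul γ) (intervalIntegrable_const.sub hW) hlower
  rw [interval_average_eq_div, lt_div_iff₀ hba] at havg
  rw [interval_average_eq_div, div_lt_iff₀ hba]
  nlinarith [mul_lt_mul_of_pos_left havg hγ, mul_lt_mul_of_pos_left hupper hba]

theorem strictMonoOn_interval_average (hf : Continuous f)
    (hlt : ∀ t > a, ⨍ x in a..t, f x < f t) :
    StrictMonoOn (fun t => ⨍ x in a..t, f x) (Ioi a) := by
  simp_rw [interval_average_eq_div]
  have hderiv : ∀ t > a, HasDerivAt (fun t => (∫ x in a..t, f x) / (t - a))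
      ((f t * (t - a) - (∫ x in a..t, f x) * 1) / (t - a) ^ 2) t := fun t ht =>
    (hf.integral_hasStrictDerivAt a t).hasDerivAt.div ((hasDerivAt_id t).sub_const a)
      (sub_pos.2 ht).ne'
  refine strictMonoOn_of_deriv_pos (convex_Ioi a)
    (fun t ht => (hderiv t ht).continuousAt.continuousWithinAt) fun t ht => ?_
  rw [interior_Ioi] at ht
  have hta : 0 < t - a := sub_pos.2 ht
  have := hlt t ht
  rw [interval_average_eq_div, div_lt_iff₀ hta] at this
  rw [(hderiv t ht).deriv]
  exact div_pos (by linarith) (by positivity)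

theorem interval_average_lt_interval_average_of_lt {s t : ℝ} (has : a < s) (hst : s < t)
    (hfas : IntervalIntegrable f MeasureTheory.volume a s)
    (hfst : IntervalIntegrable f MeasureTheory.volume s t)
    (hlt : ⨍ x in a..s, f x < ⨍ x in a..t, f x) :
    ⨍ x in a..t, f x < ⨍ x in s..t, f x := by
  rw [interval_average_eq_div, interval_average_eq_div, ← integral_add_adjacent_intervals hfas hfst,
    div_lt_div_iff₀ (by linarith) (by linarith)] at hlt ⊢
  nlinarith

end RunningAverage

theorem iteration_class_tail_avg_gt_general
    (Vinf γ t₀ : ℝ) (hγ : 0 < γ)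
    (h g W : ℝ → ℝ)
    (hh_cont : ContinuousOn h (Ici 0))
    (hW_lip : ∃ L : NNReal, LipschitzWith L W)
    (hW_mono : StrictMonoOn W (Icc 0 t₀))
    (hW_env : ∀ t ≥ (0:ℝ), γ * h t ≤ Vinf - W t ∧ Vinf - W t < γ * g t)
    (havg : ∀ t ≥ t₀, g t < (1 / t) * ∫ τ in (0:ℝ)..t, h τ) :
    ∀ s t : ℝ, 0 < s → s < t →
      (1 / t) * ∫ τ in (0:ℝ)..t, W τ < (1 / (t - s)) * ∫ τ in s..t, W τ := by
  intro s t hs hst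
  obtain ⟨L, hL⟩ := hW_lip
  have hWc : Continuous W := hL.continuous
  have hbelow : ∀ τ > 0, ⨍ x in 0..τ, W x < W τ := by
    intro τ hτ
    rcases le_or_gt τ t₀ with hle | hgt
    · exact interval_average_lt_of_strictMonoOn hτ (hW_mono.mono (Icc_subset_Icc_right hle))
    · have hh_int : IntervalIntegrable h MeasureTheory.volume 0 τ :=
        (hh_cont.mono (by simp [uIcc_of_le hτ.le, Icc_subset_Ici_self])).intervalIntegrable
      refine interval_average_lt_of_envelope hγ hτ hh_int (hWc.intervalIntegrable 0 τ)
        (fun x hx => (hW_env x hx.1).1) (hW_env τ hτ.le).2 ?_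
      simpa [interval_average_eq] using havg τ hgt.le
  have hrunning := strictMonoOn_interval_average hWc hbelow hs (hs.trans hst) hst
  simpa [interval_average_eq] using interval_average_lt_interval_average_of_lt hs hst
    (hWc.intervalIntegrable 0 s) (hWc.intervalIntegrable s t) hrunning

/-- Part (iii) of the lemma on the iteration class 𝒲: for all `0 < s < t`,
the average of `W` over `[s,t]` strictly exceeds the average of `W` over `[0,t]`. -/
theorem iteration_class_tail_avg_gt
    (Vinf γ t₀ : ℝ) (hγ : 0 < γ) (ht₀ : 0 < t₀)
    (h g W : ℝ → ℝ)
    (hh_cont : ContinuousOn h (Ici 0)) (hg_cont : ContinuousOn g (Ici 0))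
    (hh_bdd : ∃ Ch, ∀ t ≥ (0:ℝ), |h t| ≤ Ch)
    (hg_bdd : ∃ Cg, ∀ t ≥ (0:ℝ), |g t| ≤ Cg)
    (hh_pos : ∀ t ≥ (0:ℝ), 0 < h t)
    (hW_lip : ∃ L : NNReal, LipschitzWith L W)
    (hW0 : W 0 = Vinf - γ)
    (hW_mono : StrictMonoOn W (Icc 0 t₀))
    (hW_env : ∀ t ≥ (0:ℝ), γ * h t ≤ Vinf - W t ∧ Vinf - W t < γ * g t)
    (havg : ∀ t ≥ t₀, g t < (1 / t) * ∫ τ in (0:ℝ)..t, h τ) :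
    ∀ s t : ℝ, 0 < s → s < t →
      (1 / t) * ∫ τ in (0:ℝ)..t, W τ < (1 / (t - s)) * ∫ τ in s..t, W τ :=
  iteration_class_tail_avg_gt_general Vinf γ t₀ hγ h g W hh_cont hW_lip hW_mono hW_env havg
end

section
/- Conservation of mass across an end of the cylinder: under the stated hypotheses, ∫_{{v : v₁ ≤ V}} (v₁ − V)·f₋(v) dv + ∫_{{v : v₁ ≥ V}} (v₁ − V)·f₊(v) dv = 0; that is, the particle flux through the right end of the cylinder vanishes. -/
/-!
Write `L = ∫_{v₁ ≤ V} (V - v₁) f₋` for the (finite) flux entering through the end. The specular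
part of `f₊` returns exactly `L`: the reflection `v₁ ↦ 2V - v₁` preserves Lebesgue measure and
maps `{v₁ ≥ V}` onto `{v₁ ≤ V}`. The diffuse part returns `L` as well: after exchanging the
order of integration (Fubini, justified by the same computation applied to `|f₋|`), the inner
integral `∫_{v₁ ≥ V} (v₁ - V) K(v - iV, u - iV) dv` is `|u₁ - V|` by the mass condition on `K`
translated by `V`. Hence the outgoing flux is `αL + (1 - α)L = L`, cancelling the incoming `-L`.
-/

open MeasureTheory Set

namespace MeasurableEquiv

variable {ι : Type*} [DecidableEq ι]

def piCongrAt (i : ι) (g : ℝ ≃ᵐ ℝ) : (ι → ℝ) ≃ᵐ (ι → ℝ) :=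
  piCongrRight (Function.update (fun _ => MeasurableEquiv.refl ℝ) i g)

theorem piCongrAt_apply (i : ι) (g : ℝ ≃ᵐ ℝ) (v : ι → ℝ) :
    piCongrAt i g v = Function.update v i (g (v i)) := by
  funext j
  rcases eq_or_ne j i with rfl | hj
  · simp [piCongrAt, piCongrRight]
  · simp [piCongrAt, piCongrRight, hj]

theorem measurePreserving_piCongrAt [Fintype ι] (i : ι) {g : ℝ ≃ᵐ ℝ}
    (hg : MeasurePreserving g) : MeasurePreserving (piCongrAt i g) := by
  rw [volume_pi]
  refine measurePreserving_pi _ _ fun j => ?_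
  rcases eq_or_ne j i with rfl | hj
  · simpa using hg
  · simpa [hj] using MeasurePreserving.id volume

theorem coe_subLeft (a : ℝ) : ⇑(subLeft a) = (a - ·) := rfl

theorem coe_subRight (a : ℝ) : ⇑(subRight a) = (· - a) := rfl

end MeasurableEquiv

theorem Fin.update_zero_eq_vecCons {α : Type*} (v : Fin 3 → α) (a : α) :
    Function.update v 0 a = ![a, v 1, v 2] := by
  funext j
  fin_cases j <;> rfl

section FirstCoordinate

variable {g : ℝ ≃ᵐ ℝ} (hg : MeasurePreserving g) (s : Set ℝ)
include hg

theorem setIntegral_comp_firstCoord (φ : (Fin 3 → ℝ) → ℝ) :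
    ∫ v in {v : Fin 3 → ℝ | g (v 0) ∈ s}, φ ![g (v 0), v 1, v 2] =
      ∫ w in {w | w 0 ∈ s}, φ w := by
  have := (MeasurableEquiv.measurePreserving_piCongrAt 0 hg).setIntegral_preimage_emb
    (MeasurableEquiv.measurableEmbedding _) φ {w | w 0 ∈ s}
  simpa [MeasurableEquiv.piCongrAt_apply, Fin.update_zero_eq_vecCons] using this

theorem integrableOn_comp_firstCoord_iff {φ : (Fin 3 → ℝ) → ℝ} :
    IntegrableOn (fun v : Fin 3 → ℝ => φ ![g (v 0), v 1, v 2]) {v | g (v 0) ∈ s} ↔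
      IntegrableOn φ {w | w 0 ∈ s} := by
  have := (MeasurableEquiv.measurePreserving_piCongrAt 0 hg).integrableOn_comp_preimage
    (MeasurableEquiv.measurableEmbedding _) (f := φ) (s := {w | w 0 ∈ s})
  simpa [Function.comp_def, MeasurableEquiv.piCongrAt_apply, Fin.update_zero_eq_vecCons]
    using this

end FirstCoordinate

section Flux

variable (V : ℝ)

theorem setIntegral_comp_shift (φ : (Fin 3 → ℝ) → ℝ) :
    ∫ v in {v : Fin 3 → ℝ | V ≤ v 0}, φ ![v 0 - V, v 1, v 2] =
      ∫ w in {w : Fin 3 → ℝ | 0 ≤ w 0}, φ w := by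
  simpa [MeasurableEquiv.coe_subRight] using setIntegral_comp_firstCoord (g := .subRight V)
    (measurePreserving_sub_right volume V) (Ici 0) φ

theorem integrableOn_comp_shift_iff {φ : (Fin 3 → ℝ) → ℝ} :
    IntegrableOn (fun v : Fin 3 → ℝ => φ ![v 0 - V, v 1, v 2]) {v | V ≤ v 0} ↔
      IntegrableOn φ {w | 0 ≤ w 0} := by
  simpa [MeasurableEquiv.coe_subRight] using integrableOn_comp_firstCoord_iff
    (g := .subRight V) (measurePreserving_sub_right volume V) (Ici 0)

theorem reflect_sub (x : ℝ) : V - (2 * V - x) = x - V := by ring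

theorem reflect_le_iff (x : ℝ) : 2 * V - x ≤ V ↔ V ≤ x := by
  rw [sub_le_comm, two_mul, add_sub_cancel_right]

theorem setIntegral_flux_reflect (f : (Fin 3 → ℝ) → ℝ) :
    ∫ v in {v : Fin 3 → ℝ | V ≤ v 0}, (v 0 - V) * f ![2 * V - v 0, v 1, v 2] =
      ∫ u in {u : Fin 3 → ℝ | u 0 ≤ V}, (V - u 0) * f u := by
  simpa only [MeasurableEquiv.coe_subLeft, mem_Iic, Matrix.cons_val_zero, reflect_sub,
    reflect_le_iff] using setIntegral_comp_firstCoord (g := .subLeft (2 * V))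
    (Measure.measurePreserving_sub_left volume (2 * V)) (Iic V) (fun u => (V - u 0) * f u)

theorem integrableOn_flux_reflect {f : (Fin 3 → ℝ) → ℝ}
    (hf : IntegrableOn (fun u : Fin 3 → ℝ => (V - u 0) * f u) {u | u 0 ≤ V}) :
    IntegrableOn (fun v : Fin 3 → ℝ => (v 0 - V) * f ![2 * V - v 0, v 1, v 2])
      {v | V ≤ v 0} := by
  simpa only [MeasurableEquiv.coe_subLeft, mem_Iic, Matrix.cons_val_zero, reflect_sub,
    reflect_le_iff] using (integrableOn_comp_firstCoord_iff (g := .subLeft (2 * V))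
    (Measure.measurePreserving_sub_left volume (2 * V)) (Iic V)).2 hf

theorem ae_restrict_lt_of_le {ι : Type*} [Fintype ι] (i : ι) (V : ℝ) :
    ∀ᵐ u ∂(volume.restrict {u : ι → ℝ | u i ≤ V}), u i < V := by
  filter_upwards [ae_restrict_mem (measurableSet_le (measurable_pi_apply i) measurable_const),
    ae_restrict_of_ae (volume_pi (α := fun _ : ι => ℝ) ▸ Measure.ae_eval_ne _ i V)]
    with u hle hne
  exact lt_of_le_of_ne hle hne

variable {V} {K : (Fin 3 → ℝ) → (Fin 3 → ℝ) → ℝ}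
  (hK_mass : ∀ u : Fin 3 → ℝ, ∫ v in {v : Fin 3 → ℝ | 0 ≤ v 0}, v 0 * K v u = |u 0|)
include hK_mass

theorem kernel_flux {w : Fin 3 → ℝ} (hw : w 0 ≠ 0) :
    IntegrableOn (fun v : Fin 3 → ℝ => (v 0 - V) * K ![v 0 - V, v 1, v 2] w) {v | V ≤ v 0} ∧
      ∫ v in {v : Fin 3 → ℝ | V ≤ v 0}, (v 0 - V) * K ![v 0 - V, v 1, v 2] w = |w 0| := by
  have hint : IntegrableOn (fun x : Fin 3 → ℝ => x 0 * K x w) {x | 0 ≤ x 0} := by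
    by_contra hni
    exact hw (abs_eq_zero.1 ((integral_undef hni).symm.trans (hK_mass w)).symm)
  exact ⟨(integrableOn_comp_shift_iff V).2 hint,
    (setIntegral_comp_shift V fun x => x 0 * K x w).trans (hK_mass w)⟩

-- The slice `u 0 = V`, where `hK_mass` may hold only through the junk value `∫ = 0` of a
-- non-integrable function, is null.
theorem ae_kernel_flux :
    ∀ᵐ u ∂(volume.restrict {u : Fin 3 → ℝ | u 0 ≤ V}),
      IntegrableOn
        (fun v : Fin 3 → ℝ => (v 0 - V) * K ![v 0 - V, v 1, v 2] ![u 0 - V, u 1, u 2])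
        {v | V ≤ v 0} ∧
      ∫ v in {v : Fin 3 → ℝ | V ≤ v 0},
        (v 0 - V) * K ![v 0 - V, v 1, v 2] ![u 0 - V, u 1, u 2] = V - u 0 := by
  filter_upwards [ae_restrict_lt_of_le 0 V] with u hu
  simpa [abs_of_neg (sub_neg.2 hu)] using
    kernel_flux (V := V) hK_mass (w := ![u 0 - V, u 1, u 2]) (sub_neg.2 hu).ne

variable {f : (Fin 3 → ℝ) → ℝ}
  (hK_meas : Measurable fun p : (Fin 3 → ℝ) × (Fin 3 → ℝ) => K p.1 p.2)
  (hK_nonneg : ∀ v u, 0 ≤ K v u) (hf_meas : Measurable f)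
  (hf : IntegrableOn (fun u : Fin 3 → ℝ => (V - u 0) * f u) {u | u 0 ≤ V})
include hK_meas hK_nonneg hf_meas hf

theorem integrable_diffuse_flux :
    Integrable (Function.uncurry fun v u : Fin 3 → ℝ =>
        (v 0 - V) * K ![v 0 - V, v 1, v 2] ![u 0 - V, u 1, u 2] * f u)
      ((volume.restrict {v | V ≤ v 0}).prod (volume.restrict {u | u 0 ≤ V})) := by
  have hF_meas : Measurable (Function.uncurry fun v u : Fin 3 → ℝ =>
      (v 0 - V) * K ![v 0 - V, v 1, v 2] ![u 0 - V, u 1, u 2] * f u) := by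
    unfold Function.uncurry
    fun_prop
  rw [integrable_prod_iff' hF_meas.aestronglyMeasurable]
  refine ⟨(ae_kernel_flux hK_mass).mono fun u hu => hu.1.mul_const (f u), hf.norm.congr ?_⟩
  filter_upwards [ae_kernel_flux hK_mass,
    ae_restrict_mem (measurableSet_le (measurable_pi_apply 0) measurable_const)] with u hu hle
  symm
  calc ∫ v in {v : Fin 3 → ℝ | V ≤ v 0},
          ‖(v 0 - V) * K ![v 0 - V, v 1, v 2] ![u 0 - V, u 1, u 2] * f u‖
      = ∫ v in {v : Fin 3 → ℝ | V ≤ v 0},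
          (v 0 - V) * K ![v 0 - V, v 1, v 2] ![u 0 - V, u 1, u 2] * ‖f u‖ :=
        setIntegral_congr_fun (measurableSet_le measurable_const (measurable_pi_apply 0))
          fun v hv => by
            rw [norm_mul, norm_mul, Real.norm_of_nonneg (sub_nonneg.2 hv),
              Real.norm_of_nonneg (hK_nonneg _ _)]
    _ = ‖(V - u 0) * f u‖ := by
        rw [integral_mul_const, hu.2, norm_mul, Real.norm_of_nonneg (sub_nonneg.2 hle)]

theorem setIntegral_diffuse_flux :
    IntegrableOn (fun v : Fin 3 → ℝ => (v 0 - V) *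
        ∫ u in {u : Fin 3 → ℝ | u 0 ≤ V}, K ![v 0 - V, v 1, v 2] ![u 0 - V, u 1, u 2] * f u)
        {v | V ≤ v 0} ∧
      ∫ v in {v : Fin 3 → ℝ | V ≤ v 0}, (v 0 - V) * ∫ u in {u : Fin 3 → ℝ | u 0 ≤ V},
        K ![v 0 - V, v 1, v 2] ![u 0 - V, u 1, u 2] * f u =
      ∫ u in {u : Fin 3 → ℝ | u 0 ≤ V}, (V - u 0) * f u := by
  have hF := integrable_diffuse_flux hK_mass hK_meas hK_nonneg hf_meas hf
  have hrow : ∀ v : Fin 3 → ℝ, ∫ u in {u : Fin 3 → ℝ | u 0 ≤ V},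
      (v 0 - V) * K ![v 0 - V, v 1, v 2] ![u 0 - V, u 1, u 2] * f u =
      (v 0 - V) * ∫ u in {u : Fin 3 → ℝ | u 0 ≤ V},
        K ![v 0 - V, v 1, v 2] ![u 0 - V, u 1, u 2] * f u := by
    intro v
    simp_rw [mul_assoc]
    exact integral_const_mul _ _
  constructor
  · have h := hF.integral_prod_left
    simp only [Function.uncurry_apply_pair, hrow] at h
    exact h
  simp_rw [← hrow]
  rw [integral_integral_swap hF]
  refine integral_congr_ae ?_
  filter_upwards [ae_kernel_flux hK_mass] with u hu
  rw [integral_mul_const, hu.2]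

end Flux

theorem mass_conservation_right_end_general
    (V α : ℝ)
    (K : (Fin 3 → ℝ) → (Fin 3 → ℝ) → ℝ)
    (hK_meas : Measurable (fun p : (Fin 3 → ℝ) × (Fin 3 → ℝ) => K p.1 p.2))
    (hK_nonneg : ∀ v u, 0 ≤ K v u)
    (hK_mass : ∀ u : Fin 3 → ℝ,
      ∫ v in {v : Fin 3 → ℝ | 0 ≤ v 0}, v 0 * K v u = |u 0|)
    (fm fp : (Fin 3 → ℝ) → ℝ)
    (hfm_meas : Measurable fm)
    (hfm_int : Integrable (fun v : Fin 3 → ℝ => (1 + |v 0 - V|) * fm v))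
    (hfp : ∀ v : Fin 3 → ℝ, V ≤ v 0 →
      fp v = α * fm ![2 * V - v 0, v 1, v 2]
        + (1 - α) * ∫ u in {u : Fin 3 → ℝ | u 0 ≤ V},
            K ![v 0 - V, v 1, v 2] ![u 0 - V, u 1, u 2] * fm u) :
    (∫ v in {v : Fin 3 → ℝ | v 0 ≤ V}, (v 0 - V) * fm v)
      + ∫ v in {v : Fin 3 → ℝ | V ≤ v 0}, (v 0 - V) * fp v = 0 := by
  have hflux : IntegrableOn (fun u : Fin 3 → ℝ => (V - u 0) * fm u) {u | u 0 ≤ V} :=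
    hfm_int.mono (by fun_prop) (ae_of_all _ fun u => by
      rw [norm_mul, norm_mul, Real.norm_eq_abs, abs_sub_comm]
      gcongr
      exact (le_add_of_nonneg_left zero_le_one).trans (le_abs_self _)) |>.integrableOn
  obtain ⟨hdiff_int, hdiff⟩ :=
    setIntegral_diffuse_flux hK_mass hK_meas hK_nonneg hfm_meas hflux
  have hfp_flux : EqOn (fun v : Fin 3 → ℝ => (v 0 - V) * fp v)
      (fun v => α * ((v 0 - V) * fm ![2 * V - v 0, v 1, v 2]) +
        (1 - α) * ((v 0 - V) * ∫ u in {u : Fin 3 → ℝ | u 0 ≤ V},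
          K ![v 0 - V, v 1, v 2] ![u 0 - V, u 1, u 2] * fm u))
      {v | V ≤ v 0} := fun v hv => by
    simp only [hfp v hv]
    ring
  have hleft : ∫ v in {v : Fin 3 → ℝ | v 0 ≤ V}, (v 0 - V) * fm v =
      -∫ u in {u : Fin 3 → ℝ | u 0 ≤ V}, (V - u 0) * fm u := by
    rw [← integral_neg]
    congr 1 with v
    ring
  rw [hleft, setIntegral_congr_fun (measurableSet_le measurable_const (measurable_pi_apply 0))
    hfp_flux, integral_add ((integrableOn_flux_reflect V hflux).const_mul α)
    (hdiff_int.const_mul _), integral_const_mul, integral_const_mul, setIntegral_flux_reflect,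
    hdiff]
  ring

/-- Conservation of mass across the right end of the cylinder: with the mixed
specular/diffuse boundary condition, the particle flux through the end vanishes. -/
theorem mass_conservation_right_end
    (V α : ℝ) (hα0 : 0 ≤ α) (hα1 : α < 1)
    (K : (Fin 3 → ℝ) → (Fin 3 → ℝ) → ℝ)
    (hK_meas : Measurable (fun p : (Fin 3 → ℝ) × (Fin 3 → ℝ) => K p.1 p.2))
    (hK_nonneg : ∀ v u, 0 ≤ K v u)
    (hK_mass : ∀ u : Fin 3 → ℝ,
      ∫ v in {v : Fin 3 → ℝ | 0 ≤ v 0}, v 0 * K v u = |u 0|)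
    (fm fp : (Fin 3 → ℝ) → ℝ)
    (hfm_meas : Measurable fm) (hfm_nonneg : ∀ v, 0 ≤ fm v)
    (hfm_int : Integrable (fun v : Fin 3 → ℝ => (1 + |v 0 - V|) * fm v))
    (hfp_meas : Measurable fp)
    (hfp : ∀ v : Fin 3 → ℝ, V ≤ v 0 →
      fp v = α * fm ![2 * V - v 0, v 1, v 2]
        + (1 - α) * ∫ u in {u : Fin 3 → ℝ | u 0 ≤ V},
            K ![v 0 - V, v 1, v 2] ![u 0 - V, u 1, u 2] * fm u) :
    (∫ v in {v : Fin 3 → ℝ | v 0 ≤ V}, (v 0 - V) * fm v)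
      + ∫ v in {v : Fin 3 → ℝ | V ≤ v 0}, (v 0 - V) * fp v = 0 :=
  mass_conservation_right_end_general V α K hK_meas hK_nonneg hK_mass fm fp hfm_meas hfm_int hfp
end

section
/- Vanishing of the lateral force: under the stated symmetry hypotheses, for every V ∈ ℝ one has ∫_{{v : v·n ≤ 0}} (v·n)·(v₁ − V)·f₀(v) dv + ∫_{{v : v·n ≥ 0}} (v·n)·(v₁ − V)·f₊(v) dv = 0; that is, the horizontal force contribution at a point of the lateral boundary is zero. -/
/-!
The reflection `v ↦ v - 2 v₁ i` fixes `v · n`, `f₀` and `K_S(·, u)`, so on any half-space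
`{v · n ≶ 0}` the flux-weighted moment of `v₁ - V` reduces to `-V` times the flux. The incoming
half thus contributes `-V c` with `c = ∫_{v·n ≤ 0} (v·n) f₀`. The specular reflection
`v ↦ v - 2 (v·n) n` maps the outgoing half-space onto the incoming one, reversing `v · n` and fixing
`v₁`, so the specular part contributes `V c`. For the diffuse part, Fubini puts the `v`-integral
inside, where the mass condition evaluates it to `-V |u·n| = V (u·n)`, so it contributes `V c` as
well; hence the total is `-V c + α_S V c + (1 - α_S) V c = 0`.
-/

open MeasureTheory Set
open scoped RealInnerProductSpace

section Reflection

variable {E : Type*} [NormedAddCommGroup E] [InnerProductSpace ℝ E]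

theorem reflection_orthogonalComplement_singleton_apply {a : E} (ha : ‖a‖ = 1) (v : E) :
    (ℝ ∙ a)ᗮ.reflection v = v - (2 * ⟪v, a⟫) • a := by
  rw [Submodule.reflection_orthogonal_apply, Submodule.reflection_singleton_apply, ha,
    real_inner_comm, neg_sub]
  norm_num [two_smul, two_mul, add_smul]

theorem inner_reflection_orthogonalComplement_singleton {a : E} (ha : ‖a‖ = 1) (v b : E) :
    ⟪(ℝ ∙ a)ᗮ.reflection v, b⟫ = ⟪v, b⟫ - 2 * ⟪v, a⟫ * ⟪a, b⟫ := by
  rw [reflection_orthogonalComplement_singleton_apply ha, inner_sub_left, real_inner_smul_left]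

theorem inner_reflection_orthogonalComplement_singleton_self {a : E} (ha : ‖a‖ = 1) (v : E) :
    ⟪(ℝ ∙ a)ᗮ.reflection v, a⟫ = -⟪v, a⟫ := by
  rw [inner_reflection_orthogonalComplement_singleton ha, real_inner_self_eq_norm_sq, ha]
  ring

theorem inner_reflection_orthogonalComplement_singleton_of_inner_eq_zero {a b : E}
    (ha : ‖a‖ = 1) (hab : ⟪a, b⟫ = 0) (v : E) :
    ⟪(ℝ ∙ a)ᗮ.reflection v, b⟫ = ⟪v, b⟫ := by
  rw [inner_reflection_orthogonalComplement_singleton ha, hab, mul_zero, sub_zero]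

theorem preimage_reflection_setOf_inner {a b : E} (ha : ‖a‖ = 1) (hab : ⟪a, b⟫ = 0)
    (P : ℝ → Prop) : (ℝ ∙ a)ᗮ.reflection ⁻¹' {v | P ⟪v, b⟫} = {v | P ⟪v, b⟫} := by
  ext v
  simp [inner_reflection_orthogonalComplement_singleton_of_inner_eq_zero ha hab]

theorem preimage_reflection_setOf_inner_nonpos {n : E} (hn : ‖n‖ = 1) :
    (ℝ ∙ n)ᗮ.reflection ⁻¹' {v | ⟪v, n⟫ ≤ 0} = {v | 0 ≤ ⟪v, n⟫} := by
  ext v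
  simp [inner_reflection_orthogonalComplement_singleton_self hn]

theorem specular_integrand_eq_neg_comp_reflection {i n : E} (hn : ‖n‖ = 1) (hni : ⟪n, i⟫ = 0)
    (f : E → ℝ) (V : ℝ) (v : E) :
    ⟪v, n⟫ * (⟪v, i⟫ - V) * f (v - (2 * ⟪v, n⟫) • n)
      = -(⟪(ℝ ∙ n)ᗮ.reflection v, n⟫ * (⟪(ℝ ∙ n)ᗮ.reflection v, i⟫ - V)
          * f ((ℝ ∙ n)ᗮ.reflection v)) := by
  rw [inner_reflection_orthogonalComplement_singleton_self hn,
    inner_reflection_orthogonalComplement_singleton_of_inner_eq_zero hn hni,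
    reflection_orthogonalComplement_singleton_apply hn]
  ring

end Reflection

theorem norm_mul_sub_mul_le (a t V b : ℝ) :
    ‖a * (t - V) * b‖ ≤ max 1 |V| * ‖a * (1 + |t|) * b‖ := by
  have htV : |t - V| ≤ max 1 |V| * (1 + |t|) := by
    nlinarith [abs_sub t V, le_max_left 1 |V|, le_max_right 1 |V|, abs_nonneg t]
  simp only [norm_mul, Real.norm_eq_abs, abs_of_nonneg (by positivity : (0 : ℝ) ≤ 1 + |t|)]
  calc |a| * |t - V| * |b| ≤ |a| * (max 1 |V| * (1 + |t|)) * |b| := by gcongr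
    _ = _ := by ring

theorem MeasureTheory.Integrable.mul_sub_mul_of_one_add_abs {α : Type*} [MeasurableSpace α]
    {μ : Measure α} {a t b : α → ℝ} (V : ℝ) (h : Integrable (fun x => a x * (1 + |t x|) * b x) μ)
    (hm : AEStronglyMeasurable (fun x => a x * (t x - V) * b x) μ) :
    Integrable (fun x => a x * (t x - V) * b x) μ :=
  (h.norm.const_mul (max 1 |V|)).mono' hm
    (ae_of_all _ fun x => norm_mul_sub_mul_le (a x) (t x) V (b x))

section HalfSpaces

variable {E : Type*} [NormedAddCommGroup E] [InnerProductSpace ℝ E] [FiniteDimensional ℝ E]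
  [MeasurableSpace E] [BorelSpace E] {i n : E}

theorem setIntegral_inner_mul_inner_sub_mul_of_even (hi : ‖i‖ = 1) (hin : ⟪i, n⟫ = 0)
    {s : Set E} (hs : (ℝ ∙ i)ᗮ.reflection ⁻¹' s = s) {g : E → ℝ}
    (hg : ∀ v, g (v - (2 * ⟪v, i⟫) • i) = g v) (V : ℝ)
    (hint : IntegrableOn (fun v => ⟪v, n⟫ * (⟪v, i⟫ - V) * g v) s) :
    ∫ v in s, ⟪v, n⟫ * (⟪v, i⟫ - V) * g v = -V * ∫ v in s, ⟪v, n⟫ * g v := by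
  set σ := (ℝ ∙ i)ᗮ.reflection
  set h : E → ℝ := fun v => ⟪v, n⟫ * (⟪v, i⟫ - V) * g v
  have hσ := σ.measurePreserving
  have hσ_emb := σ.toHomeomorph.measurableEmbedding
  have hint_σ : IntegrableOn (h ∘ σ) s := by
    simpa only [hs] using (hσ.integrableOn_comp_preimage hσ_emb).2 hint
  have h_σ : ∫ v in s, h (σ v) = ∫ v in s, h v := by
    conv_lhs => rw [← hs]
    exact hσ.setIntegral_preimage_emb hσ_emb h s
  have hσi : ∀ v, ⟪σ v, i⟫ = -⟪v, i⟫ := inner_reflection_orthogonalComplement_singleton_self hi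
  have hσn : ∀ v, ⟪σ v, n⟫ = ⟪v, n⟫ :=
    inner_reflection_orthogonalComplement_singleton_of_inner_eq_zero hi hin
  have hgσ : ∀ v, g (σ v) = g v := fun v =>
    (congrArg g (reflection_orthogonalComplement_singleton_apply hi v)).trans (hg v)
  have h_add : ∀ v, h v + h (σ v) = -(2 * V) * (⟪v, n⟫ * g v) := fun v => by
    simp only [h, hσi, hσn, hgσ]
    ring
  have h_sum := integral_add hint hint_σ
  simp only [Function.comp_apply, h_add, integral_const_mul, h_σ] at h_sum
  linarith

theorem setIntegral_specular (hn : ‖n‖ = 1) (hni : ⟪n, i⟫ = 0) (f : E → ℝ) (V : ℝ) :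
    ∫ v in {v | 0 ≤ ⟪v, n⟫}, ⟪v, n⟫ * (⟪v, i⟫ - V) * f (v - (2 * ⟪v, n⟫) • n)
      = -∫ v in {v | ⟪v, n⟫ ≤ 0}, ⟪v, n⟫ * (⟪v, i⟫ - V) * f v := by
  set σ := (ℝ ∙ n)ᗮ.reflection
  simp only [specular_integrand_eq_neg_comp_reflection hn hni, integral_neg,
    ← preimage_reflection_setOf_inner_nonpos hn]
  rw [σ.measurePreserving.setIntegral_preimage_emb σ.toHomeomorph.measurableEmbedding
    (fun w => ⟪w, n⟫ * (⟪w, i⟫ - V) * f w)]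

theorem integrableOn_specular (hn : ‖n‖ = 1) (hni : ⟪n, i⟫ = 0) {f : E → ℝ} {V : ℝ}
    (hf : IntegrableOn (fun v => ⟪v, n⟫ * (⟪v, i⟫ - V) * f v) {v | ⟪v, n⟫ ≤ 0}) :
    IntegrableOn (fun v => ⟪v, n⟫ * (⟪v, i⟫ - V) * f (v - (2 * ⟪v, n⟫) • n))
      {v | 0 ≤ ⟪v, n⟫} := by
  set σ := (ℝ ∙ n)ᗮ.reflection
  simp only [specular_integrand_eq_neg_comp_reflection hn hni,
    ← preimage_reflection_setOf_inner_nonpos hn]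
  exact ((σ.measurePreserving.integrableOn_comp_preimage
    σ.toHomeomorph.measurableEmbedding).2 hf).neg

theorem integrable_diffuse_integrand {K : E → E → ℝ} {f : E → ℝ}
    (hK : Measurable fun p : E × E => K p.1 p.2) (hf : Measurable f) {s t : Set E}
    (hKf : IntegrableOn
      (fun p : E × E => ⟪p.1, n⟫ * (1 + |⟪p.1, i⟫|) * K p.1 p.2 * f p.2) (s ×ˢ t))
    (V : ℝ) :
    Integrable (fun p : E × E => ⟪p.1, n⟫ * (⟪p.1, i⟫ - V) * (K p.1 p.2 * f p.2))
      ((volume.restrict s).prod (volume.restrict t)) := by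
  rw [Measure.prod_restrict, ← Measure.volume_eq_prod]
  refine Integrable.mul_sub_mul_of_one_add_abs V
    (by simpa only [mul_assoc, IntegrableOn] using hKf) ?_
  exact ((by fun_prop : Measurable fun p : E × E => ⟪p.1, n⟫ * (⟪p.1, i⟫ - V)).mul
    (hK.mul (hf.comp measurable_snd))).aestronglyMeasurable

theorem integrableOn_diffuse {K : E → E → ℝ} {f : E → ℝ} {s t : Set E} {V : ℝ}
    (hF : Integrable (fun p : E × E => ⟪p.1, n⟫ * (⟪p.1, i⟫ - V) * (K p.1 p.2 * f p.2))
      ((volume.restrict s).prod (volume.restrict t))) :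
    IntegrableOn (fun v => ⟪v, n⟫ * (⟪v, i⟫ - V) * ∫ u in t, K v u * f u) s := by
  simpa only [integral_const_mul, IntegrableOn] using hF.integral_prod_left

theorem setIntegral_diffuse (hi : ‖i‖ = 1) (hin : ⟪i, n⟫ = 0) {K : E → E → ℝ} {f : E → ℝ}
    (hK_even : ∀ v u, K (v - (2 * ⟪v, i⟫) • i) u = K v u)
    (hK_mass : ∀ u, ⟪u, n⟫ ≤ 0 → ∫ v in {v | 0 ≤ ⟪v, n⟫}, ⟪v, n⟫ * K v u = |⟪u, n⟫|)
    (V : ℝ)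
    (hF : Integrable (fun p : E × E => ⟪p.1, n⟫ * (⟪p.1, i⟫ - V) * (K p.1 p.2 * f p.2))
      ((volume.restrict {v | 0 ≤ ⟪v, n⟫}).prod (volume.restrict {u | ⟪u, n⟫ ≤ 0}))) :
    ∫ v in {v | 0 ≤ ⟪v, n⟫}, ⟪v, n⟫ * (⟪v, i⟫ - V) * ∫ u in {u | ⟪u, n⟫ ≤ 0}, K v u * f u
      = V * ∫ u in {u | ⟪u, n⟫ ≤ 0}, ⟪u, n⟫ * f u := by
  have h_inner : ∀ᵐ u ∂volume.restrict {u : E | ⟪u, n⟫ ≤ 0},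
      ∫ v in {v | 0 ≤ ⟪v, n⟫}, ⟪v, n⟫ * (⟪v, i⟫ - V) * (K v u * f u) = V * (⟪u, n⟫ * f u) := by
    filter_upwards [hF.prod_left_ae,
      ae_restrict_mem (measurableSet_le (by fun_prop) measurable_const)] with u hu_int hu
    rw [setIntegral_inner_mul_inner_sub_mul_of_even hi hin
      (preimage_reflection_setOf_inner hi hin (0 ≤ ·)) (fun v => by rw [hK_even]) V hu_int]
    simp_rw [← mul_assoc, integral_mul_const, hK_mass u hu,
      abs_of_nonpos (show ⟪u, n⟫ ≤ 0 from hu)]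
    ring
  simp_rw [← integral_const_mul]
  rw [integral_integral_swap hF, integral_congr_ae h_inner, integral_const_mul]

end HalfSpaces

theorem lateral_force_vanishes_general
    (i T n : EuclideanSpace ℝ (Fin 3))
    (hON : Orthonormal ℝ ![i, T, n])
    (αS : ℝ)
    (KS : EuclideanSpace ℝ (Fin 3) → EuclideanSpace ℝ (Fin 3) → ℝ)
    (hK_meas : Measurable
      (fun p : EuclideanSpace ℝ (Fin 3) × EuclideanSpace ℝ (Fin 3) => KS p.1 p.2))
    (hK_even : ∀ v u : EuclideanSpace ℝ (Fin 3), KS (v - (2 * ⟪v, i⟫) • i) u = KS v u)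
    (hK_mass : ∀ u : EuclideanSpace ℝ (Fin 3), ⟪u, n⟫ ≤ 0 →
      ∫ v in {v : EuclideanSpace ℝ (Fin 3) | 0 ≤ ⟪v, n⟫}, ⟪v, n⟫ * KS v u = |⟪u, n⟫|)
    (f₀ fp : EuclideanSpace ℝ (Fin 3) → ℝ)
    (hf₀_meas : Measurable f₀)
    (hf₀_even : ∀ v : EuclideanSpace ℝ (Fin 3), f₀ (v - (2 * ⟪v, i⟫) • i) = f₀ v)
    (hf₀_int : Integrable
      (fun v : EuclideanSpace ℝ (Fin 3) => |⟪v, n⟫| * (1 + |⟪v, i⟫|) * f₀ v))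
    (hKf_int : IntegrableOn
      (fun p : EuclideanSpace ℝ (Fin 3) × EuclideanSpace ℝ (Fin 3) =>
        ⟪p.1, n⟫ * (1 + |⟪p.1, i⟫|) * KS p.1 p.2 * f₀ p.2)
      ({v : EuclideanSpace ℝ (Fin 3) | 0 ≤ ⟪v, n⟫} ×ˢ
        {u : EuclideanSpace ℝ (Fin 3) | ⟪u, n⟫ ≤ 0}))
    (fp_def : ∀ v : EuclideanSpace ℝ (Fin 3), 0 ≤ ⟪v, n⟫ →
      fp v = αS * f₀ (v - (2 * ⟪v, n⟫) • n)
        + (1 - αS) * ∫ u in {u : EuclideanSpace ℝ (Fin 3) | ⟪u, n⟫ ≤ 0}, KS v u * f₀ u) :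
    ∀ V : ℝ,
      (∫ v in {v : EuclideanSpace ℝ (Fin 3) | ⟪v, n⟫ ≤ 0}, ⟪v, n⟫ * (⟪v, i⟫ - V) * f₀ v)
        + ∫ v in {v : EuclideanSpace ℝ (Fin 3) | 0 ≤ ⟪v, n⟫}, ⟪v, n⟫ * (⟪v, i⟫ - V) * fp v
      = 0 := by
  intro V
  have hi : ‖i‖ = 1 := by simpa using hON.1 0
  have hn : ‖n‖ = 1 := by simpa using hON.1 2
  have hin : ⟪i, n⟫ = 0 := by simpa using hON.2 (show (0 : Fin 3) ≠ 2 by decide)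
  have hni : ⟪n, i⟫ = 0 := by rwa [real_inner_comm]
  have h_in_int : Integrable (fun v => ⟪v, n⟫ * (⟪v, i⟫ - V) * f₀ v) :=
    Integrable.mul_sub_mul_of_one_add_abs V
      (hf₀_int.congr' (by fun_prop) (ae_of_all _ fun v => by simp)) (by fun_prop)
  have h_in := setIntegral_inner_mul_inner_sub_mul_of_even hi hin
    (preimage_reflection_setOf_inner hi hin (· ≤ 0)) hf₀_even V h_in_int.integrableOn
  have hF := integrable_diffuse_integrand hK_meas hf₀_meas hKf_int V
  have h_out : ∫ v in {v | 0 ≤ ⟪v, n⟫}, ⟪v, n⟫ * (⟪v, i⟫ - V) * fp v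
      = αS * (∫ v in {v | 0 ≤ ⟪v, n⟫}, ⟪v, n⟫ * (⟪v, i⟫ - V) * f₀ (v - (2 * ⟪v, n⟫) • n))
        + (1 - αS) * ∫ v in {v | 0 ≤ ⟪v, n⟫},
            ⟪v, n⟫ * (⟪v, i⟫ - V) * ∫ u in {u | ⟪u, n⟫ ≤ 0}, KS v u * f₀ u := by
    rw [← integral_const_mul, ← integral_const_mul, ← integral_add
      ((integrableOn_specular hn hni h_in_int.integrableOn).const_mul αS)
      ((integrableOn_diffuse hF).const_mul (1 - αS))]
    refine setIntegral_congr_fun (measurableSet_le measurable_const (by fun_prop)) fun v hv => ?_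
    rw [fp_def v hv]
    ring
  rw [h_out, setIntegral_specular hn hni, setIntegral_diffuse hi hin hK_even hK_mass V hF, h_in]
  ring

/-- Vanishing of the lateral force: under the symmetry hypotheses on the lateral
collision kernel and the initial density, the horizontal force contribution at a
point of the lateral boundary is zero, for every horizontal speed `V`. -/
theorem lateral_force_vanishes
    (i T n : EuclideanSpace ℝ (Fin 3))
    (hi : i = EuclideanSpace.single 0 1)
    (hON : Orthonormal ℝ ![i, T, n])
    (αS : ℝ) (hα0 : 0 ≤ αS) (hα1 : αS ≤ 1)
    (KS : EuclideanSpace ℝ (Fin 3) → EuclideanSpace ℝ (Fin 3) → ℝ)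
    (hK_meas : Measurable
      (fun p : EuclideanSpace ℝ (Fin 3) × EuclideanSpace ℝ (Fin 3) => KS p.1 p.2))
    (hK_nonneg : ∀ v u, 0 ≤ KS v u)
    (hK_even : ∀ v u : EuclideanSpace ℝ (Fin 3), KS (v - (2 * ⟪v, i⟫) • i) u = KS v u)
    (hK_mass : ∀ u : EuclideanSpace ℝ (Fin 3), ⟪u, n⟫ ≤ 0 →
      ∫ v in {v : EuclideanSpace ℝ (Fin 3) | 0 ≤ ⟪v, n⟫}, ⟪v, n⟫ * KS v u = |⟪u, n⟫|)
    (f₀ fp : EuclideanSpace ℝ (Fin 3) → ℝ)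
    (hf₀_meas : Measurable f₀) (hf₀_nonneg : ∀ v, 0 ≤ f₀ v)
    (hf₀_even : ∀ v : EuclideanSpace ℝ (Fin 3), f₀ (v - (2 * ⟪v, i⟫) • i) = f₀ v)
    (hf₀_int : Integrable
      (fun v : EuclideanSpace ℝ (Fin 3) => |⟪v, n⟫| * (1 + |⟪v, i⟫|) * f₀ v))
    (hKf_int : IntegrableOn
      (fun p : EuclideanSpace ℝ (Fin 3) × EuclideanSpace ℝ (Fin 3) =>
        ⟪p.1, n⟫ * (1 + |⟪p.1, i⟫|) * KS p.1 p.2 * f₀ p.2)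
      ({v : EuclideanSpace ℝ (Fin 3) | 0 ≤ ⟪v, n⟫} ×ˢ
        {u : EuclideanSpace ℝ (Fin 3) | ⟪u, n⟫ ≤ 0}))
    (fp_def : ∀ v : EuclideanSpace ℝ (Fin 3), 0 ≤ ⟪v, n⟫ →
      fp v = αS * f₀ (v - (2 * ⟪v, n⟫) • n)
        + (1 - αS) * ∫ u in {u : EuclideanSpace ℝ (Fin 3) | ⟪u, n⟫ ≤ 0}, KS v u * f₀ u) :
    ∀ V : ℝ,
      (∫ v in {v : EuclideanSpace ℝ (Fin 3) | ⟪v, n⟫ ≤ 0}, ⟪v, n⟫ * (⟪v, i⟫ - V) * f₀ v)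
        + ∫ v in {v : EuclideanSpace ℝ (Fin 3) | 0 ≤ ⟪v, n⟫}, ⟪v, n⟫ * (⟪v, i⟫ - V) * fp v
      = 0 :=
  lateral_force_vanishes_general i T n hON αS KS hK_meas hK_even hK_mass f₀ fp hf₀_meas hf₀_even
    hf₀_int hKf_int fp_def
end

section
/- Alternative lateral boundary condition: under the stated hypotheses, for every V ∈ ℝ, ∫_{{v : v·n ≤ 0}} (v·n)·(v₁ − V)·f₀(v) dv + ∫_{{v : v·n ≥ 0}} (v·n)·(v₁ − V)·f₊(v) dv = −V·∫_{{v : v·n ≤ 0}} (v·n)·f₀(v) dv. In particular the lateral force contribution depends only on V, is nonnegative for V ≥ 0, and is a nondecreasing function of V on [0,∞). -/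
open MeasureTheory Set
open scoped RealInnerProductSpace

/-!
The reflection `v ↦ v - 2 (⟪v, i⟫ - V) i` in the plane `v₁ = V` preserves Lebesgue measure and,
since `i ⊥ n`, both half-spaces `⟪v, n⟫ ≤ 0` and `⟪v, n⟫ ≥ 0`, while it changes the sign of
`v₁ - V`. Evenness of `K_S` makes `f₊` invariant under it, so the outgoing integral is the
integral of an odd function and vanishes. By the same argument at `V = 0`, using evenness of
`f₀`, the incoming integral reduces to `-V ∫_{v·n ≤ 0} (v·n) f₀`, and this integral is `≤ 0`.
-/

theorem MeasureTheory.MeasurePreserving.setIntegral_eq_zero_of_comp_eq_neg {α : Type*}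
    [MeasurableSpace α] {μ : Measure α} {σ : α → α} (hσ : MeasurePreserving σ μ μ)
    (hσ_emb : MeasurableEmbedding σ) {S : Set α} (hS : σ ⁻¹' S = S) (hSm : MeasurableSet S)
    {g : α → ℝ} (hg : ∀ x ∈ S, g (σ x) = -g x) :
    ∫ x in S, g x ∂μ = 0 := by
  have h := hσ.setIntegral_preimage_emb hσ_emb g S
  rw [hS, setIntegral_congr_fun hSm hg, integral_neg] at h
  linarith

theorem MeasureTheory.Integrable.mul_of_abs_le_abs {α : Type*} [MeasurableSpace α]
    {μ : Measure α} {w g f : α → ℝ} (hwf : Integrable (fun x => w x * f x) μ)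
    (hw : Measurable w) (hg : Measurable g) (hgw : ∀ x, |g x| ≤ |w x|) :
    Integrable (fun x => g x * f x) μ := by
  -- `g / w` is bounded by `1`, also where `w = 0` and the division returns `0`
  have h_eq : (fun x => g x * f x) = fun x => g x / w x * (w x * f x) := by
    funext x
    by_cases hx : w x = 0
    · have : g x = 0 := abs_nonpos_iff.1 (by simpa [hx] using hgw x)
      simp [this, hx]
    · field_simp
  rw [h_eq]
  refine hwf.bdd_mul (c := 1) (hg.div hw).aestronglyMeasurable (ae_of_all _ fun x => ?_)
  rw [Real.norm_eq_abs, abs_div]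
  exact div_le_one_of_le₀ (hgw x) (abs_nonneg _)

section HyperplaneReflection

variable {E : Type*} [NormedAddCommGroup E] [InnerProductSpace ℝ E] {i n : E} {V : ℝ}

/-- For a unit vector `i`, the reflection in the affine hyperplane `⟪v, i⟫ = V`. -/
noncomputable def hyperplaneReflection (i : E) (V : ℝ) (v : E) : E :=
  v - (2 * (⟪v, i⟫ - V)) • i

theorem hyperplaneReflection_zero_apply (v : E) :
    hyperplaneReflection i 0 v = v - (2 * ⟪v, i⟫) • i := by
  simp only [hyperplaneReflection, sub_zero]

theorem inner_hyperplaneReflection_of_inner_eq_zero (hin : ⟪i, n⟫ = 0) (v : E) :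
    ⟪hyperplaneReflection i V v, n⟫ = ⟪v, n⟫ := by
  simp only [hyperplaneReflection, inner_sub_left, real_inner_smul_left, hin, mul_zero, sub_zero]

theorem preimage_hyperplaneReflection_setOf_inner (hin : ⟪i, n⟫ = 0) (p : ℝ → Prop) :
    hyperplaneReflection i V ⁻¹' {v | p ⟪v, n⟫} = {v | p ⟪v, n⟫} := by
  ext v
  simp [inner_hyperplaneReflection_of_inner_eq_zero hin]

theorem inner_hyperplaneReflection_self (hi : ‖i‖ = 1) (v : E) :
    ⟪hyperplaneReflection i V v, i⟫ = 2 * V - ⟪v, i⟫ := by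
  simp only [hyperplaneReflection, inner_sub_left, real_inner_smul_left,
    real_inner_self_eq_norm_sq, hi]
  ring

theorem hyperplaneReflection_sub_smul (hi : ‖i‖ = 1) (v : E) :
    hyperplaneReflection i V v - V • i = (v - V • i) - (2 * ⟪v - V • i, i⟫) • i := by
  simp only [hyperplaneReflection, inner_sub_left, real_inner_smul_left,
    real_inner_self_eq_norm_sq, hi]
  module

theorem hyperplaneReflection_eq_reflection_add (hi : ‖i‖ = 1) :
    hyperplaneReflection i V = fun v => (ℝ ∙ i)ᗮ.reflection v + (2 * V) • i := by
  funext v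
  rw [Submodule.reflection_orthogonal_apply, Submodule.reflection_apply,
    Submodule.starProjection_singleton, hi, hyperplaneReflection, real_inner_comm]
  simp only [RCLike.ofReal_real_eq_id, id, one_pow, div_one]
  module

variable [MeasurableSpace E] [BorelSpace E]

theorem measurePreserving_hyperplaneReflection [FiniteDimensional ℝ E] (hi : ‖i‖ = 1) :
    MeasurePreserving (hyperplaneReflection i V) volume volume := by
  rw [hyperplaneReflection_eq_reflection_add hi]
  exact (measurePreserving_add_right _ _).comp (LinearIsometryEquiv.measurePreserving _)

theorem measurableEmbedding_hyperplaneReflection (hi : ‖i‖ = 1) :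
    MeasurableEmbedding (hyperplaneReflection i V) := by
  rw [hyperplaneReflection_eq_reflection_add hi]
  exact ((ℝ ∙ i)ᗮ.reflection.toHomeomorph.trans (Homeomorph.addRight _)).measurableEmbedding

variable [FiniteDimensional ℝ E]

theorem setIntegral_inner_mul_inner_sub_mul_eq_zero (hi : ‖i‖ = 1) (hin : ⟪i, n⟫ = 0)
    {S : Set E} (hS : hyperplaneReflection i V ⁻¹' S = S) (hSm : MeasurableSet S) {g : E → ℝ}
    (hg : ∀ v ∈ S, g (hyperplaneReflection i V v) = g v) :
    ∫ v in S, ⟪v, n⟫ * (⟪v, i⟫ - V) * g v = 0 :=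
  (measurePreserving_hyperplaneReflection hi).setIntegral_eq_zero_of_comp_eq_neg
    (measurableEmbedding_hyperplaneReflection hi) hS hSm fun v hv => by
      rw [inner_hyperplaneReflection_of_inner_eq_zero hin, inner_hyperplaneReflection_self hi,
        hg v hv]
      ring

theorem setIntegral_inner_mul_inner_sub_mul (hi : ‖i‖ = 1) (hin : ⟪i, n⟫ = 0) {S : Set E}
    (hS : hyperplaneReflection i 0 ⁻¹' S = S) (hSm : MeasurableSet S) {f : E → ℝ}
    (hf_even : ∀ v, f (v - (2 * ⟪v, i⟫) • i) = f v)
    (hf_int : Integrable (fun v => |⟪v, n⟫| * (1 + |⟪v, i⟫|) * f v)) (V : ℝ) :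
    ∫ v in S, ⟪v, n⟫ * (⟪v, i⟫ - V) * f v = -V * ∫ v in S, ⟪v, n⟫ * f v := by
  have h_odd : ∫ v in S, ⟪v, n⟫ * (⟪v, i⟫ - 0) * f v = 0 :=
    setIntegral_inner_mul_inner_sub_mul_eq_zero hi hin hS hSm fun v _ => by
      rw [hyperplaneReflection_zero_apply, hf_even]
  have hw : Measurable fun v : E => |⟪v, n⟫| * (1 + |⟪v, i⟫|) := by fun_prop
  have h_int_odd : Integrable (fun v => ⟪v, n⟫ * (⟪v, i⟫ - 0) * f v) :=
    hf_int.mul_of_abs_le_abs hw (by fun_prop) fun v => by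
      rw [sub_zero, abs_mul, abs_mul, abs_abs, abs_of_pos (by positivity : 0 < 1 + |⟪v, i⟫|)]
      exact mul_le_mul_of_nonneg_left (by linarith) (abs_nonneg _)
  have h_int : Integrable (fun v => ⟪v, n⟫ * f v) :=
    hf_int.mul_of_abs_le_abs hw (by fun_prop) fun v => by
      rw [abs_mul, abs_abs, abs_of_pos (by positivity : 0 < 1 + |⟪v, i⟫|)]
      exact le_mul_of_one_le_right (abs_nonneg _) (by linarith [abs_nonneg ⟪v, i⟫])
  calc ∫ v in S, ⟪v, n⟫ * (⟪v, i⟫ - V) * f v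
      = ∫ v in S, (⟪v, n⟫ * (⟪v, i⟫ - 0) * f v - V * (⟪v, n⟫ * f v)) := by
        congr 1; funext v; ring
    _ = -V * ∫ v in S, ⟪v, n⟫ * f v := by
        rw [integral_sub h_int_odd.integrableOn (h_int.integrableOn.const_mul V),
          integral_const_mul, h_odd]
        ring

end HyperplaneReflection

theorem lateral_force_alternative_general
    (i T n : EuclideanSpace ℝ (Fin 3))
    (hON : Orthonormal ℝ ![i, T, n])
    (KS : EuclideanSpace ℝ (Fin 3) → EuclideanSpace ℝ (Fin 3) → ℝ)
    (hK_even : ∀ v u : EuclideanSpace ℝ (Fin 3), KS (v - (2 * ⟪v, i⟫) • i) u = KS v u)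
    (f₀ : EuclideanSpace ℝ (Fin 3) → ℝ)
    (hf₀_nonneg : ∀ v, 0 ≤ f₀ v)
    (hf₀_even : ∀ v : EuclideanSpace ℝ (Fin 3), f₀ (v - (2 * ⟪v, i⟫) • i) = f₀ v)
    (hf₀_int : Integrable
      (fun v : EuclideanSpace ℝ (Fin 3) => |⟪v, n⟫| * (1 + |⟪v, i⟫|) * f₀ v))
    (fp : ℝ → EuclideanSpace ℝ (Fin 3) → ℝ)
    (fp_def : ∀ (V : ℝ) (v : EuclideanSpace ℝ (Fin 3)), 0 ≤ ⟪v, n⟫ →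
      fp V v = ∫ u in {u : EuclideanSpace ℝ (Fin 3) | ⟪u, n⟫ ≤ 0},
        KS (v - V • i) (u - V • i) * f₀ u)
    (F : ℝ → ℝ)
    (hF : ∀ V : ℝ, F V =
      (∫ v in {v : EuclideanSpace ℝ (Fin 3) | ⟪v, n⟫ ≤ 0}, ⟪v, n⟫ * (⟪v, i⟫ - V) * f₀ v)
        + ∫ v in {v : EuclideanSpace ℝ (Fin 3) | 0 ≤ ⟪v, n⟫}, ⟪v, n⟫ * (⟪v, i⟫ - V) * fp V v) :
    (∀ V : ℝ, F V =
        -V * ∫ v in {v : EuclideanSpace ℝ (Fin 3) | ⟪v, n⟫ ≤ 0}, ⟪v, n⟫ * f₀ v) ∧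
    (∀ V ≥ (0:ℝ), 0 ≤ F V) ∧
    MonotoneOn F (Ici 0) := by
  have hi : ‖i‖ = 1 := hON.1 0
  have hin : ⟪i, n⟫ = 0 := hON.inner_eq_zero (i := 0) (j := 2) (by decide)
  have h_in_meas : MeasurableSet {v : EuclideanSpace ℝ (Fin 3) | ⟪v, n⟫ ≤ 0} :=
    measurableSet_le (by fun_prop) measurable_const
  have h_out_meas : MeasurableSet {v : EuclideanSpace ℝ (Fin 3) | 0 ≤ ⟪v, n⟫} :=
    measurableSet_le measurable_const (by fun_prop)
  have hfp_even : ∀ V, ∀ v ∈ {v : EuclideanSpace ℝ (Fin 3) | 0 ≤ ⟪v, n⟫},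
      fp V (hyperplaneReflection i V v) = fp V v := fun V v hv => by
    have hv' : 0 ≤ ⟪hyperplaneReflection i V v, n⟫ := by
      rwa [inner_hyperplaneReflection_of_inner_eq_zero hin]
    simp only [fp_def V _ hv', fp_def V v hv, hyperplaneReflection_sub_smul hi, hK_even]
  have hF_eq : ∀ V : ℝ, F V =
      -V * ∫ v in {v : EuclideanSpace ℝ (Fin 3) | ⟪v, n⟫ ≤ 0}, ⟪v, n⟫ * f₀ v := fun V => by
    rw [hF V, setIntegral_inner_mul_inner_sub_mul hi hin
        (preimage_hyperplaneReflection_setOf_inner hin (· ≤ 0)) h_in_meas hf₀_even hf₀_int,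
      setIntegral_inner_mul_inner_sub_mul_eq_zero hi hin
        (preimage_hyperplaneReflection_setOf_inner hin (0 ≤ ·)) h_out_meas (hfp_even V), add_zero]
  have h_incoming_nonpos :
      ∫ v in {v : EuclideanSpace ℝ (Fin 3) | ⟪v, n⟫ ≤ 0}, ⟪v, n⟫ * f₀ v ≤ 0 :=
    setIntegral_nonpos h_in_meas fun v hv => mul_nonpos_of_nonpos_of_nonneg hv (hf₀_nonneg v)
  refine ⟨hF_eq, fun V hV => ?_, fun a _ b _ hab => ?_⟩
  · rw [hF_eq V]; nlinarith
  · rw [hF_eq a, hF_eq b]; nlinarith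

/-- Alternative lateral boundary condition: the lateral force contribution equals
`−V·∫_{v·n ≤ 0} (v·n) f₀(v) dv`; in particular it depends only on `V`, is
nonnegative for `V ≥ 0`, and is nondecreasing in `V` on `[0,∞)`. -/
theorem lateral_force_alternative
    (i T n : EuclideanSpace ℝ (Fin 3))
    (hi : i = EuclideanSpace.single 0 1)
    (hON : Orthonormal ℝ ![i, T, n])
    (KS : EuclideanSpace ℝ (Fin 3) → EuclideanSpace ℝ (Fin 3) → ℝ)
    (hK_meas : Measurable
      (fun p : EuclideanSpace ℝ (Fin 3) × EuclideanSpace ℝ (Fin 3) => KS p.1 p.2))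
    (hK_nonneg : ∀ v u, 0 ≤ KS v u)
    (hK_even : ∀ v u : EuclideanSpace ℝ (Fin 3), KS (v - (2 * ⟪v, i⟫) • i) u = KS v u)
    (f₀ : EuclideanSpace ℝ (Fin 3) → ℝ)
    (hf₀_meas : Measurable f₀) (hf₀_nonneg : ∀ v, 0 ≤ f₀ v)
    (hf₀_even : ∀ v : EuclideanSpace ℝ (Fin 3), f₀ (v - (2 * ⟪v, i⟫) • i) = f₀ v)
    (hf₀_int : Integrable
      (fun v : EuclideanSpace ℝ (Fin 3) => |⟪v, n⟫| * (1 + |⟪v, i⟫|) * f₀ v))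
    (hKf_int : ∀ V : ℝ, IntegrableOn
      (fun p : EuclideanSpace ℝ (Fin 3) × EuclideanSpace ℝ (Fin 3) =>
        ⟪p.1, n⟫ * (1 + |⟪p.1, i⟫|) * KS (p.1 - V • i) (p.2 - V • i) * f₀ p.2)
      ({v : EuclideanSpace ℝ (Fin 3) | 0 ≤ ⟪v, n⟫} ×ˢ
        {u : EuclideanSpace ℝ (Fin 3) | ⟪u, n⟫ ≤ 0}))
    (fp : ℝ → EuclideanSpace ℝ (Fin 3) → ℝ)
    (fp_def : ∀ (V : ℝ) (v : EuclideanSpace ℝ (Fin 3)), 0 ≤ ⟪v, n⟫ →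
      fp V v = ∫ u in {u : EuclideanSpace ℝ (Fin 3) | ⟪u, n⟫ ≤ 0},
        KS (v - V • i) (u - V • i) * f₀ u)
    (F : ℝ → ℝ)
    (hF : ∀ V : ℝ, F V =
      (∫ v in {v : EuclideanSpace ℝ (Fin 3) | ⟪v, n⟫ ≤ 0}, ⟪v, n⟫ * (⟪v, i⟫ - V) * f₀ v)
        + ∫ v in {v : EuclideanSpace ℝ (Fin 3) | 0 ≤ ⟪v, n⟫}, ⟪v, n⟫ * (⟪v, i⟫ - V) * fp V v) :
    (∀ V : ℝ, F V =
        -V * ∫ v in {v : EuclideanSpace ℝ (Fin 3) | ⟪v, n⟫ ≤ 0}, ⟪v, n⟫ * f₀ v) ∧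
    (∀ V ≥ (0:ℝ), 0 ≤ F V) ∧
    MonotoneOn F (Ici 0) :=
  lateral_force_alternative_general i T n hON KS hK_even f₀ hf₀_nonneg hf₀_even hf₀_int fp fp_def F
    hF
end

section
/- Total force formula at the right end of the cylinder: under the stated hypotheses, ∫_{{v : v₁ ≤ V}} (V − v₁)²·f₋(v) dv + ∫_{{v : v₁ ≥ V}} (v₁ − V)²·f₊(v) dv = ∫_{{u : u₁ ≤ V}} ℓ(u − iV)·f₋(u) du, where ℓ(w) = (1 + α)·w₁² + (1 − α)·∫_{{v : v₁ ≥ 0}} v₁²·K(v, w) dv, and the equality holds in [0, +∞] (all integrands are nonnegative). -/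
open MeasureTheory Set
open scoped ENNReal

/-!
The specular part of the reflected flux is the incident flux `∫_{u₁ ≤ V} (u₁ − V)² f₋` mirrored
by `v₁ ↦ 2V − v₁`, contributing `α (u₁ − V)²` to `ℓ`. For the diffuse part, Tonelli exchanges the
outgoing velocity `v` and the incoming velocity `u`, and the translation `v ↦ v − iV` turns the
`v`-integral into `∫_{w₁ ≥ 0} w₁² K(w, u − iV) dw`. Adding the incident flux gives the
coefficient `1 + α` of `(u₁ − V)²`.
-/

local notation "ℝ³" => Fin 3 → ℝ

def mapFirstCoord (g : ℝ ≃ᵐ ℝ) : ℝ³ ≃ᵐ ℝ³ :=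
  MeasurableEquiv.piCongrRight ![g, .refl ℝ, .refl ℝ]

lemma mapFirstCoord_apply (g : ℝ ≃ᵐ ℝ) (v : ℝ³) :
    mapFirstCoord g v = ![g (v 0), v 1, v 2] := by
  funext i; fin_cases i <;> rfl

lemma measurePreserving_mapFirstCoord {g : ℝ ≃ᵐ ℝ} (hg : MeasurePreserving g) :
    MeasurePreserving (mapFirstCoord g) :=
  volume_preserving_pi fun i => by
    fin_cases i
    exacts [hg, .id _, .id _]

lemma setLIntegral_comp_mapFirstCoord {g : ℝ ≃ᵐ ℝ} (hg : MeasurePreserving g) (s : Set ℝ)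
    (F : ℝ³ → ℝ≥0∞) :
    ∫⁻ v in {v : ℝ³ | g (v 0) ∈ s}, F ![g (v 0), v 1, v 2] = ∫⁻ u in {u : ℝ³ | u 0 ∈ s}, F u := by
  have h := (measurePreserving_mapFirstCoord hg).setLIntegral_comp_preimage_emb
    (mapFirstCoord g).measurableEmbedding F {u | u 0 ∈ s}
  simp only [mapFirstCoord_apply] at h
  exact h

lemma setLIntegral_reflect_first (V : ℝ) (F : ℝ³ → ℝ≥0∞) :
    ∫⁻ v in {v : ℝ³ | V ≤ v 0}, F ![2 * V - v 0, v 1, v 2] = ∫⁻ u in {u : ℝ³ | u 0 ≤ V}, F u := by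
  have h := setLIntegral_comp_mapFirstCoord (g := .subLeft (2 * V))
    (Measure.measurePreserving_sub_left volume (2 * V)) (Iic V) F
  change ∫⁻ v in {v : ℝ³ | 2 * V - v 0 ≤ V}, F ![2 * V - v 0, v 1, v 2] = _ at h
  have hS : {v : ℝ³ | 2 * V - v 0 ≤ V} = {v | V ≤ v 0} := by
    ext v
    change 2 * V - v 0 ≤ V ↔ V ≤ v 0
    constructor <;> intro <;> linarith
  rwa [hS] at h

lemma setLIntegral_shift_first (V : ℝ) (F : ℝ³ → ℝ≥0∞) :
    ∫⁻ v in {v : ℝ³ | V ≤ v 0}, F ![v 0 - V, v 1, v 2] = ∫⁻ w in {w : ℝ³ | 0 ≤ w 0}, F w := by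
  have h := setLIntegral_comp_mapFirstCoord (g := .subRight V)
    (measurePreserving_sub_right volume V) (Ici 0) F
  change ∫⁻ v in {v : ℝ³ | 0 ≤ v 0 - V}, F ![v 0 - V, v 1, v 2] = _ at h
  simpa only [sub_nonneg, mem_Ici] using h

lemma setLIntegral_specular_flux (V : ℝ) (f : ℝ³ → ℝ≥0∞) :
    ∫⁻ v in {v : ℝ³ | V ≤ v 0}, ENNReal.ofReal ((v 0 - V) ^ 2) * f ![2 * V - v 0, v 1, v 2]
      = ∫⁻ u in {u : ℝ³ | u 0 ≤ V}, ENNReal.ofReal ((u 0 - V) ^ 2) * f u := by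
  rw [← setLIntegral_reflect_first V]
  congr! 4 with v
  simp only [Matrix.cons_val_zero]
  ring

lemma setLIntegral_diffuse_flux (V : ℝ) {k : ℝ³ → ℝ³ → ℝ≥0∞}
    (hk : Measurable (Function.uncurry k)) {f : ℝ³ → ℝ≥0∞} (hf : Measurable f) :
    ∫⁻ v in {v : ℝ³ | V ≤ v 0}, ENNReal.ofReal ((v 0 - V) ^ 2) *
        ∫⁻ u in {u : ℝ³ | u 0 ≤ V}, k ![v 0 - V, v 1, v 2] u * f u
      = ∫⁻ u in {u : ℝ³ | u 0 ≤ V},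
          (∫⁻ w in {w : ℝ³ | 0 ≤ w 0}, ENNReal.ofReal ((w 0) ^ 2) * k w u) * f u := by
  have hshift : Measurable fun v : ℝ³ => ![v 0 - V, v 1, v 2] := by fun_prop
  have hflux : Measurable fun p : ℝ³ × ℝ³ =>
      ENNReal.ofReal ((p.1 0 - V) ^ 2) * k ![p.1 0 - V, p.1 1, p.1 2] p.2 :=
    (by fun_prop : Measurable fun p : ℝ³ × ℝ³ => ENNReal.ofReal ((p.1 0 - V) ^ 2)).mul
      (hk.comp ((hshift.comp measurable_fst).prodMk measurable_snd))
  calc _ = ∫⁻ v in {v : ℝ³ | V ≤ v 0}, ∫⁻ u in {u : ℝ³ | u 0 ≤ V},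
          ENNReal.ofReal ((v 0 - V) ^ 2) * k ![v 0 - V, v 1, v 2] u * f u := by
        simp_rw [mul_assoc, lintegral_const_mul' _ _ ENNReal.ofReal_ne_top]
    _ = ∫⁻ u in {u : ℝ³ | u 0 ≤ V}, ∫⁻ v in {v : ℝ³ | V ≤ v 0},
          ENNReal.ofReal ((v 0 - V) ^ 2) * k ![v 0 - V, v 1, v 2] u * f u :=
        lintegral_lintegral_swap (hflux.mul (hf.comp measurable_snd)).aemeasurable
    _ = _ := lintegral_congr fun u => by
        have hflux_u : Measurable fun v : ℝ³ =>
            ENNReal.ofReal ((v 0 - V) ^ 2) * k ![v 0 - V, v 1, v 2] u :=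
          (hflux.comp (measurable_prodMk_right (y := u)) :)
        rw [lintegral_mul_const _ hflux_u]
        exact congrArg (· * f u)
          (setLIntegral_shift_first V fun w => ENNReal.ofReal ((w 0) ^ 2) * k w u)

lemma setLIntegral_reflected_flux {V : ℝ} {a b : ℝ≥0∞} (hb : b ≠ ∞) {k : ℝ³ → ℝ³ → ℝ≥0∞}
    (hk : Measurable (Function.uncurry k)) {f : ℝ³ → ℝ≥0∞} (hf : Measurable f) {fp : ℝ³ → ℝ≥0∞}
    (hfp : ∀ v : ℝ³, V ≤ v 0 → fp v = a * f ![2 * V - v 0, v 1, v 2]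
      + b * ∫⁻ u in {u : ℝ³ | u 0 ≤ V}, k ![v 0 - V, v 1, v 2] u * f u) :
    ∫⁻ v in {v : ℝ³ | V ≤ v 0}, ENNReal.ofReal ((v 0 - V) ^ 2) * fp v
      = a * (∫⁻ u in {u : ℝ³ | u 0 ≤ V}, ENNReal.ofReal ((u 0 - V) ^ 2) * f u)
        + b * ∫⁻ u in {u : ℝ³ | u 0 ≤ V},
          (∫⁻ w in {w : ℝ³ | 0 ≤ w 0}, ENNReal.ofReal ((w 0) ^ 2) * k w u) * f u := by
  have hS : MeasurableSet {v : ℝ³ | V ≤ v 0} := measurableSet_le measurable_const (by fun_prop)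
  have hspec : Measurable fun v : ℝ³ =>
      ENNReal.ofReal ((v 0 - V) ^ 2) * f ![2 * V - v 0, v 1, v 2] := by fun_prop
  rw [setLIntegral_congr_fun hS fun v hv => by rw [hfp v hv, mul_add, mul_left_comm _ a,
      mul_left_comm _ b],
    lintegral_add_left (hspec.const_mul a), lintegral_const_mul _ hspec,
    lintegral_const_mul' _ _ hb, setLIntegral_specular_flux, setLIntegral_diffuse_flux V hk hf]

theorem right_end_force_formula_general
    (V α : ℝ) (hα0 : 0 ≤ α)
    (K : (Fin 3 → ℝ) → (Fin 3 → ℝ) → ℝ)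
    (hK_meas : Measurable (fun p : (Fin 3 → ℝ) × (Fin 3 → ℝ) => K p.1 p.2))
    (fm : (Fin 3 → ℝ) → ℝ)
    (hfm_meas : Measurable fm) (hfm_nonneg : ∀ v, 0 ≤ fm v)
    (fp : (Fin 3 → ℝ) → ℝ≥0∞)
    (hfp : ∀ v : Fin 3 → ℝ, V ≤ v 0 →
      fp v = ENNReal.ofReal (α * fm ![2 * V - v 0, v 1, v 2])
        + ENNReal.ofReal (1 - α) * ∫⁻ u in {u : Fin 3 → ℝ | u 0 ≤ V},
            ENNReal.ofReal (K ![v 0 - V, v 1, v 2] ![u 0 - V, u 1, u 2] * fm u))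
    (ℓ : (Fin 3 → ℝ) → ℝ≥0∞)
    (hℓ : ∀ w : Fin 3 → ℝ, ℓ w = ENNReal.ofReal ((1 + α) * (w 0) ^ 2)
        + ENNReal.ofReal (1 - α) * ∫⁻ v in {v : Fin 3 → ℝ | 0 ≤ v 0},
            ENNReal.ofReal ((v 0) ^ 2 * K v w)) :
    (∫⁻ v in {v : Fin 3 → ℝ | v 0 ≤ V}, ENNReal.ofReal ((V - v 0) ^ 2 * fm v))
      + ∫⁻ v in {v : Fin 3 → ℝ | V ≤ v 0}, ENNReal.ofReal ((v 0 - V) ^ 2) * fp v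
    = ∫⁻ u in {u : Fin 3 → ℝ | u 0 ≤ V}, ℓ ![u 0 - V, u 1, u 2] * ENNReal.ofReal (fm u) := by
  set k : ℝ³ → ℝ³ → ℝ≥0∞ := fun w u => ENNReal.ofReal (K w ![u 0 - V, u 1, u 2])
  have hk : Measurable (Function.uncurry k) := by
    have hshift : Measurable fun u : ℝ³ => ![u 0 - V, u 1, u 2] := by fun_prop
    exact (hK_meas.comp (measurable_fst.prodMk (hshift.comp measurable_snd))).ennreal_ofReal
  have hf : Measurable fun u => ENNReal.ofReal (fm u) := hfm_meas.ennreal_ofReal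
  have hfp' : ∀ v : ℝ³, V ≤ v 0 →
      fp v = ENNReal.ofReal α * ENNReal.ofReal (fm ![2 * V - v 0, v 1, v 2])
        + ENNReal.ofReal (1 - α) *
          ∫⁻ u in {u : ℝ³ | u 0 ≤ V}, k ![v 0 - V, v 1, v 2] u * ENNReal.ofReal (fm u) := by
    intro v hv
    simp_rw [hfp v hv, ENNReal.ofReal_mul hα0, ENNReal.ofReal_mul' (hfm_nonneg _)]
    rfl
  have h₁ : Measurable fun u : ℝ³ => ENNReal.ofReal ((V - u 0) ^ 2 * fm u) := by fun_prop
  have h₂ : Measurable fun u : ℝ³ =>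
      ENNReal.ofReal α * (ENNReal.ofReal ((u 0 - V) ^ 2) * ENNReal.ofReal (fm u)) := by fun_prop
  rw [setLIntegral_reflected_flux ENNReal.ofReal_ne_top hk hf hfp',
    ← lintegral_const_mul' _ _ ENNReal.ofReal_ne_top,
    ← lintegral_const_mul' _ _ ENNReal.ofReal_ne_top,
    ← lintegral_add_left h₂, ← lintegral_add_left h₁]
  refine lintegral_congr fun u => ?_
  have hloss : ∫⁻ w in {w : ℝ³ | 0 ≤ w 0}, ENNReal.ofReal ((w 0) ^ 2 * K w ![u 0 - V, u 1, u 2])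
      = ∫⁻ w in {w : ℝ³ | 0 ≤ w 0}, ENNReal.ofReal ((w 0) ^ 2) * k w u := by
    simp_rw [ENNReal.ofReal_mul (sq_nonneg _)]
    rfl
  have h_one_add : (0 : ℝ) ≤ 1 + α := by linarith
  rw [hℓ, hloss, sub_sq_comm V, ENNReal.ofReal_mul (sq_nonneg _), Matrix.cons_val_zero,
    ENNReal.ofReal_mul h_one_add, ENNReal.ofReal_add zero_le_one hα0, ENNReal.ofReal_one]
  ring

/-- Total force formula at the right end of the cylinder, as an identity in `[0,∞]`:
the incident plus reflected momentum flux equals `∫_{u₁ ≤ V} ℓ(u − iV) f₋(u) du`,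
where `ℓ(w) = (1+α)w₁² + (1−α)∫_{v₁ ≥ 0} v₁² K(v,w) dv`. -/
theorem right_end_force_formula
    (V α : ℝ) (hα0 : 0 ≤ α) (hα1 : α < 1)
    (K : (Fin 3 → ℝ) → (Fin 3 → ℝ) → ℝ)
    (hK_meas : Measurable (fun p : (Fin 3 → ℝ) × (Fin 3 → ℝ) => K p.1 p.2))
    (hK_nonneg : ∀ v u, 0 ≤ K v u)
    (fm : (Fin 3 → ℝ) → ℝ)
    (hfm_meas : Measurable fm) (hfm_nonneg : ∀ v, 0 ≤ fm v)
    (fp : (Fin 3 → ℝ) → ℝ≥0∞) (hfp_meas : Measurable fp)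
    (hfp : ∀ v : Fin 3 → ℝ, V ≤ v 0 →
      fp v = ENNReal.ofReal (α * fm ![2 * V - v 0, v 1, v 2])
        + ENNReal.ofReal (1 - α) * ∫⁻ u in {u : Fin 3 → ℝ | u 0 ≤ V},
            ENNReal.ofReal (K ![v 0 - V, v 1, v 2] ![u 0 - V, u 1, u 2] * fm u))
    (ℓ : (Fin 3 → ℝ) → ℝ≥0∞)
    (hℓ : ∀ w : Fin 3 → ℝ, ℓ w = ENNReal.ofReal ((1 + α) * (w 0) ^ 2)
        + ENNReal.ofReal (1 - α) * ∫⁻ v in {v : Fin 3 → ℝ | 0 ≤ v 0},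
            ENNReal.ofReal ((v 0) ^ 2 * K v w)) :
    (∫⁻ v in {v : Fin 3 → ℝ | v 0 ≤ V}, ENNReal.ofReal ((V - v 0) ^ 2 * fm v))
      + ∫⁻ v in {v : Fin 3 → ℝ | V ≤ v 0}, ENNReal.ofReal ((v 0 - V) ^ 2) * fp v
    = ∫⁻ u in {u : Fin 3 → ℝ | u 0 ≤ V}, ℓ ![u 0 - V, u 1, u 2] * ENNReal.ofReal (fm u) :=
  right_end_force_formula_general V α hα0 K hK_meas fm hfm_meas hfm_nonneg fp hfp ℓ hℓ
end

section
/- The fictitious force F₀(V) := F_S(V) + C·(∫_{−∞}^{V} ℓ(v − V)·a₀(v) dv − ∫_{V}^{∞} ℓ(v − V)·a₀(v) dv) is a C¹ function on (0,∞) satisfying F₀(V) > 0 and F₀′(V) > 0 for every V > 0; that is, the force on the body computed by ignoring recollisions is positive and strictly increasing in the body's velocity. -/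
/-!
Let `ψ = oddExt ℓ` be the odd function equal to `ℓ` on `(-∞, 0]` and to `-ℓ` on `(0, ∞)`.
The bracket in `F₀` is `G V = ∫ ψ (v - V) a₀ v dv`, and `ψ` is `C¹` with `ψ' = -|ℓ'|`, so
differentiating under the integral sign gives `G' V = ∫ |ℓ' (v - V)| a₀ v dv`. This is positive
because `ℓ'` vanishes only at `0` while `a₀` is positive on a nonempty open set. Since `ψ` is odd
and `a₀` even, `G 0 = 0`, hence `G > 0` on `(0, ∞)`; adding the nonnegative, nondecreasing `F_S`
keeps both signs.
-/

open Set MeasureTheory Filter Topology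

lemma Function.Even.deriv_odd {f : ℝ → ℝ} (hf : f.Even) : (deriv f).Odd := fun x => by
  have h := deriv_comp_neg f x
  simp only [hf _] at h
  linarith

lemma Function.Odd.integral_eq_zero {g : ℝ → ℝ} (hg : g.Odd) : ∫ v, g v = 0 := by
  have h := integral_neg_eq_self g volume
  simp only [hg _, integral_neg] at h
  linarith

noncomputable def oddExt (f : ℝ → ℝ) (w : ℝ) : ℝ := if w ≤ 0 then f w else -f w

section OddExt

variable {f : ℝ → ℝ}

lemma abs_oddExt (w : ℝ) : |oddExt f w| = |f w| := by
  unfold oddExt; split_ifs <;> simp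

lemma oddExt_odd (hf : f.Even) (h0 : f 0 = 0) : (oddExt f).Odd := fun w => by
  rcases lt_trichotomy w 0 with h | rfl | h
  · simp [oddExt, h.le, h, hf w]
  · simp [oddExt, h0]
  · simp [oddExt, h.le, not_le.2 h, hf w]

lemma continuous_oddExt (hf : Continuous f) (h0 : f 0 = 0) : Continuous (oddExt f) :=
  hf.if_le hf.neg continuous_id continuous_const fun w hw => by simp [hw, h0]

lemma hasDerivAt_oddExt (hf : Differentiable ℝ f) (h0 : f 0 = 0) (h0' : deriv f 0 = 0)
    (w : ℝ) : HasDerivAt (oddExt f) (oddExt (deriv f) w) w := by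
  rcases lt_trichotomy w 0 with h | rfl | h
  · have hloc : oddExt f =ᶠ[𝓝 w] f :=
      Filter.mem_of_superset (Iio_mem_nhds h) fun x hx => if_pos (le_of_lt hx)
    rw [oddExt, if_pos h.le]
    exact (hf w).hasDerivAt.congr_of_eventuallyEq hloc
  · have hIic : HasDerivWithinAt (oddExt f) 0 (Iic 0) 0 := by
      have := (hf 0).hasDerivAt.hasDerivWithinAt (s := Iic 0)
      rw [h0'] at this
      exact this.congr (fun x hx => if_pos hx) (if_pos le_rfl)
    -- on `[0, ∞)` the function is `-f`, also at `0` because `f 0 = 0`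
    have hIci : HasDerivWithinAt (oddExt f) 0 (Ici 0) 0 := by
      have := (hf 0).hasDerivAt.neg.hasDerivWithinAt (s := Ici 0)
      rw [h0', neg_zero] at this
      refine this.congr (fun x hx => ?_) (by simp [oddExt, h0])
      rcases (mem_Ici.1 hx).eq_or_lt with rfl | hx
      · simp [oddExt, h0]
      · exact if_neg (not_le.2 hx)
    have := hIic.union hIci
    rw [Iic_union_Ici, hasDerivWithinAt_univ] at this
    simpa [oddExt, h0'] using this
  · have hloc : oddExt f =ᶠ[𝓝 w] fun x => -f x :=
      Filter.mem_of_superset (Ioi_mem_nhds h) fun x hx => if_neg (not_le.2 hx)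
    rw [oddExt, if_neg (not_le.2 h)]
    exact (hf w).hasDerivAt.neg.congr_of_eventuallyEq hloc

lemma setIntegral_Iic_sub_setIntegral_Ici_eq_integral_oddExt {a : ℝ → ℝ} {V : ℝ}
    (h : Integrable fun v => oddExt f (v - V) * a v) :
    (∫ v in Iic V, f (v - V) * a v) - ∫ v in Ici V, f (v - V) * a v
      = ∫ v, oddExt f (v - V) * a v := by
  rw [← integral_add_compl measurableSet_Iic h, compl_Iic, integral_Ici_eq_integral_Ioi,
    sub_eq_add_neg, ← integral_neg]
  congr 1
  · exact setIntegral_congr_fun measurableSet_Iic fun v hv => by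
      simp [oddExt, sub_nonpos.2 (mem_Iic.1 hv)]
  · exact setIntegral_congr_fun measurableSet_Ioi fun v hv => by
      simp [oddExt, not_le.2 (sub_pos.2 (mem_Ioi.1 hv))]

end OddExt

/-- `hdom` is the integrability of `translateSup (fun w => ℓ w + |deriv ℓ w|) R · * a₀`. -/
noncomputable def translateSup (m : ℝ → ℝ) (R v : ℝ) : ℝ := ⨆ W : Icc (-R) R, m (v - W)

section Translate

variable {ψ ψ' m a : ℝ → ℝ}

lemma le_translateSup (hm : Continuous m) {R x : ℝ} (hx : x ∈ Icc (-R) R) (v : ℝ) :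
    m (v - x) ≤ translateSup m R v :=
  le_ciSup (isCompact_range (by fun_prop : Continuous fun W : Icc (-R) R => m (v - W))).bddAbove
    (⟨x, hx⟩ : Icc (-R) R)

lemma ball_subset_Icc_abs_add (x r : ℝ) : Metric.ball x r ⊆ Icc (-(|x| + r)) (|x| + r) := by
  rw [Real.ball_eq_Ioo]
  exact fun y hy => ⟨by linarith [neg_abs_le x, hy.1], by linarith [le_abs_self x, hy.2]⟩

lemma norm_comp_sub_mul_le_translateSup (hm : Continuous m) (hψm : ∀ w, |ψ w| ≤ m w)
    (ha : ∀ v, 0 ≤ a v) {V₀ x : ℝ} (hx : x ∈ Metric.ball V₀ 1) (v : ℝ) :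
    ‖ψ (v - x) * a v‖ ≤ translateSup m (|V₀| + 1) v * a v := by
  rw [norm_mul, Real.norm_eq_abs, Real.norm_of_nonneg (ha v)]
  exact mul_le_mul_of_nonneg_right
    ((hψm _).trans (le_translateSup hm (ball_subset_Icc_abs_add V₀ 1 hx) v)) (ha v)

lemma integrable_comp_sub_mul (hψ : Continuous ψ) (ha : Continuous a) (ha0 : ∀ v, 0 ≤ a v)
    (hm : Continuous m) (hψm : ∀ w, |ψ w| ≤ m w)
    (hdom : ∀ R > 0, Integrable fun v => translateSup m R v * a v) (V : ℝ) :
    Integrable fun v => ψ (v - V) * a v :=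
  (hdom _ (by positivity)).mono'
    (by fun_prop : Continuous fun v => ψ (v - V) * a v).aestronglyMeasurable
    (Eventually.of_forall
      (norm_comp_sub_mul_le_translateSup hm hψm ha0 (Metric.mem_ball_self one_pos)))

lemma continuous_integral_comp_sub_mul (hψ : Continuous ψ) (ha : Continuous a)
    (ha0 : ∀ v, 0 ≤ a v) (hm : Continuous m) (hψm : ∀ w, |ψ w| ≤ m w)
    (hdom : ∀ R > 0, Integrable fun v => translateSup m R v * a v) :
    Continuous fun V => ∫ v, ψ (v - V) * a v :=
  continuous_iff_continuousAt.2 fun V₀ => continuousAt_of_dominated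
    (Eventually.of_forall fun V =>
      (by fun_prop : Continuous fun v => ψ (v - V) * a v).aestronglyMeasurable)
    (eventually_of_mem (Metric.ball_mem_nhds V₀ one_pos) fun _ hx =>
      Eventually.of_forall (norm_comp_sub_mul_le_translateSup hm hψm ha0 hx))
    (hdom _ (by positivity))
    (Eventually.of_forall fun v => (by fun_prop : Continuous fun V => ψ (v - V) * a v).continuousAt)

lemma hasDerivAt_integral_comp_sub_mul (hψ : ∀ w, HasDerivAt ψ (ψ' w) w) (hψ' : Continuous ψ')
    (ha : Continuous a) (ha0 : ∀ v, 0 ≤ a v) (hm : Continuous m) (hψm : ∀ w, |ψ w| ≤ m w)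
    (hψ'm : ∀ w, |ψ' w| ≤ m w)
    (hdom : ∀ R > 0, Integrable fun v => translateSup m R v * a v) (V₀ : ℝ) :
    HasDerivAt (fun V => ∫ v, ψ (v - V) * a v) (∫ v, -ψ' (v - V₀) * a v) V₀ := by
  have hψc : Continuous ψ := continuous_iff_continuousAt.2 fun w => (hψ w).continuousAt
  refine (hasDerivAt_integral_of_dominated_loc_of_deriv_le (F' := fun x v => -ψ' (v - x) * a v)
    (Metric.ball_mem_nhds V₀ one_pos)
    (Eventually.of_forall fun V =>
      (by fun_prop : Continuous fun v => ψ (v - V) * a v).aestronglyMeasurable)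
    (integrable_comp_sub_mul hψc ha ha0 hm hψm hdom V₀)
    (by fun_prop : Continuous fun v => -ψ' (v - V₀) * a v).aestronglyMeasurable
    (Eventually.of_forall fun v x hx => ?_) (hdom (|V₀| + 1) (by positivity))
    (Eventually.of_forall fun v x _ => ?_)).2
  · simpa only [neg_mul, norm_neg] using norm_comp_sub_mul_le_translateSup hm hψ'm ha0 hx v
  · simpa using ((hψ (v - x)).comp x ((hasDerivAt_id x).const_sub v)).mul_const (a v)

lemma integral_comp_sub_mul_pos {h : ℝ → ℝ} (ha : Continuous a) (ha0 : ∀ v, 0 ≤ a v)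
    (hne : ∃ v, a v ≠ 0) (hh0 : ∀ w, 0 ≤ h w) (hh : ∀ w ≠ 0, h w ≠ 0) {V : ℝ}
    (hint : Integrable fun v => h (v - V) * a v) : 0 < ∫ v, h (v - V) * a v := by
  rw [integral_pos_iff_support_of_nonneg (fun v => mul_nonneg (hh0 _) (ha0 v)) hint]
  obtain ⟨v₀, hv₀⟩ := hne
  have hsub : {v | a v ≠ 0} \ {V} ⊆ Function.support fun v => h (v - V) * a v :=
    fun v hv => mul_ne_zero (hh _ (sub_ne_zero.2 hv.2)) hv.1
  calc 0 < volume ({v | a v ≠ 0} \ {V}) := by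
        rw [measure_sdiff_null (measure_singleton V)]
        exact (isOpen_ne_fun ha continuous_const).measure_pos volume ⟨v₀, hv₀⟩
    _ ≤ _ := measure_mono hsub

end Translate

section Loss

variable {ℓ : ℝ → ℝ}

lemma deriv_pos_of_even (hℓ : ℓ.Even) (hneg : ∀ w < 0, deriv ℓ w < 0) {w : ℝ} (hw : 0 < w) :
    0 < deriv ℓ w := by
  have := hneg (-w) (neg_lt_zero.2 hw)
  rw [hℓ.deriv_odd] at this
  linarith

lemma deriv_ne_zero_of_even (hℓ : ℓ.Even) (hneg : ∀ w < 0, deriv ℓ w < 0) {w : ℝ} (hw : w ≠ 0) :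
    deriv ℓ w ≠ 0 :=
  hw.lt_or_gt.elim (fun h => (hneg w h).ne) fun h => (deriv_pos_of_even hℓ hneg h).ne'

lemma neg_oddExt_deriv_eq_abs (hℓ : ℓ.Even) (hneg : ∀ w < 0, deriv ℓ w < 0) (w : ℝ) :
    -oddExt (deriv ℓ) w = |deriv ℓ w| := by
  rcases lt_trichotomy w 0 with h | rfl | h
  · simp [oddExt, h.le, abs_of_neg (hneg w h)]
  · simp [oddExt, hℓ.deriv_odd.map_zero]
  · simp [oddExt, not_le.2 h, abs_of_pos (deriv_pos_of_even hℓ hneg h)]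

variable {a : ℝ → ℝ}

lemma integrable_oddExt_comp_sub_mul (hℓ : ContDiff ℝ 1 ℓ) (hℓ0 : ℓ 0 = 0)
    (hℓ_nonneg : ∀ w, 0 ≤ ℓ w) (ha : Continuous a) (ha0 : ∀ v, 0 ≤ a v)
    (hdom : ∀ R > 0, Integrable fun v => translateSup (fun w => ℓ w + |deriv ℓ w|) R v * a v)
    (V : ℝ) : Integrable fun v => oddExt ℓ (v - V) * a v :=
  integrable_comp_sub_mul (continuous_oddExt hℓ.continuous hℓ0) ha ha0
    (by fun_prop) (fun w => by simp [abs_oddExt, abs_of_nonneg (hℓ_nonneg w)])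
    hdom V

lemma hasDerivAt_integral_oddExt_comp_sub_mul (hℓ : ContDiff ℝ 1 ℓ) (hℓ_even : ℓ.Even)
    (hℓ0 : ℓ 0 = 0) (hℓ_nonneg : ∀ w, 0 ≤ ℓ w) (hneg : ∀ w < 0, deriv ℓ w < 0)
    (ha : Continuous a) (ha0 : ∀ v, 0 ≤ a v)
    (hdom : ∀ R > 0, Integrable fun v => translateSup (fun w => ℓ w + |deriv ℓ w|) R v * a v)
    (V : ℝ) :
    HasDerivAt (fun V => ∫ v, oddExt ℓ (v - V) * a v) (∫ v, |deriv ℓ (v - V)| * a v) V := by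
  have hℓ'0 : deriv ℓ 0 = 0 := hℓ_even.deriv_odd.map_zero
  simpa only [neg_oddExt_deriv_eq_abs hℓ_even hneg] using
    hasDerivAt_integral_comp_sub_mul
      (hasDerivAt_oddExt (hℓ.differentiable one_ne_zero) hℓ0 hℓ'0)
      (continuous_oddExt (hℓ.continuous_deriv le_rfl) hℓ'0) ha ha0
      (by fun_prop) (fun w => by simp [abs_oddExt, abs_of_nonneg (hℓ_nonneg w)])
      (fun w => by simp [abs_oddExt, hℓ_nonneg w]) hdom V

lemma continuous_integral_abs_deriv_comp_sub_mul (hℓ : ContDiff ℝ 1 ℓ)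
    (hℓ_nonneg : ∀ w, 0 ≤ ℓ w) (ha : Continuous a) (ha0 : ∀ v, 0 ≤ a v)
    (hdom : ∀ R > 0, Integrable fun v => translateSup (fun w => ℓ w + |deriv ℓ w|) R v * a v) :
    Continuous fun V => ∫ v, |deriv ℓ (v - V)| * a v :=
  continuous_integral_comp_sub_mul (hℓ.continuous_deriv le_rfl).abs ha ha0
    (by fun_prop) (fun w => by simp [hℓ_nonneg w]) hdom

lemma integral_abs_deriv_comp_sub_mul_pos (hℓ : ContDiff ℝ 1 ℓ) (hℓ_even : ℓ.Even)
    (hℓ_nonneg : ∀ w, 0 ≤ ℓ w) (hneg : ∀ w < 0, deriv ℓ w < 0)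
    (ha : Continuous a) (ha0 : ∀ v, 0 ≤ a v) (hne : ∃ v, a v ≠ 0)
    (hdom : ∀ R > 0, Integrable fun v => translateSup (fun w => ℓ w + |deriv ℓ w|) R v * a v)
    (V : ℝ) : 0 < ∫ v, |deriv ℓ (v - V)| * a v :=
  integral_comp_sub_mul_pos ha ha0 hne (fun _ => abs_nonneg _)
    (fun _ hw => abs_ne_zero.2 (deriv_ne_zero_of_even hℓ_even hneg hw))
    (integrable_comp_sub_mul (hℓ.continuous_deriv le_rfl).abs ha ha0 (by fun_prop)
      (fun w => by simp [hℓ_nonneg w]) hdom V)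

end Loss

/-- The fictitious force `F₀(V) = F_S(V) + C(∫_{v ≤ V} ℓ(v−V)a₀(v)dv − ∫_{v ≥ V} ℓ(v−V)a₀(v)dv)`
is `C¹` on `(0,∞)` with `F₀(V) > 0` and `F₀′(V) > 0` for every `V > 0`. -/
theorem fictitious_force_positive_increasing
    (ℓ a₀ FS : ℝ → ℝ) (C : ℝ) (hC : 0 < C)
    (hℓ_C1 : ContDiff ℝ 1 ℓ) (hℓ_even : ∀ w, ℓ (-w) = ℓ w) (hℓ0 : ℓ 0 = 0)
    (hℓ_nonneg : ∀ w, 0 ≤ ℓ w)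
    (hℓ_deriv : ∀ w < (0:ℝ), deriv ℓ w < 0)
    (ha₀_cont : Continuous a₀) (ha₀_even : ∀ v, a₀ (-v) = a₀ v)
    (ha₀_nonneg : ∀ v, 0 ≤ a₀ v) (ha₀_ne : ∃ v, a₀ v ≠ 0)
    (hdom : ∀ R > (0:ℝ), Integrable (fun v : ℝ =>
      (⨆ W : Icc (-R) R, (ℓ (v - (W : ℝ)) + |deriv ℓ (v - (W : ℝ))|)) * a₀ v))
    (hFS : ContDiff ℝ 1 FS) (hFS_nonneg : ∀ V, 0 ≤ FS V)
    (hFS_mono : ∀ V, 0 ≤ deriv FS V)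
    (F₀ : ℝ → ℝ)
    (hF₀ : ∀ V : ℝ, F₀ V = FS V + C * ((∫ v in Iic V, ℓ (v - V) * a₀ v)
        - ∫ v in Ici V, ℓ (v - V) * a₀ v)) :
    ∃ F₀' : ℝ → ℝ, ContinuousOn F₀' (Ioi 0) ∧
      (∀ V ∈ Ioi (0:ℝ), HasDerivAt F₀ (F₀' V) V) ∧
      ∀ V ∈ Ioi (0:ℝ), 0 < F₀ V ∧ 0 < F₀' V := by
  set G : ℝ → ℝ := fun V => ∫ v, oddExt ℓ (v - V) * a₀ v
  set g : ℝ → ℝ := fun V => ∫ v, |deriv ℓ (v - V)| * a₀ v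
  have hG : ∀ V, HasDerivAt G (g V) V := hasDerivAt_integral_oddExt_comp_sub_mul hℓ_C1 hℓ_even
    hℓ0 hℓ_nonneg hℓ_deriv ha₀_cont ha₀_nonneg hdom
  have hg_pos : ∀ V, 0 < g V := integral_abs_deriv_comp_sub_mul_pos hℓ_C1 hℓ_even hℓ_nonneg
    hℓ_deriv ha₀_cont ha₀_nonneg ha₀_ne hdom
  have hG0 : G 0 = 0 := by
    show ∫ v, oddExt ℓ (v - 0) * a₀ v = 0
    simp only [sub_zero]
    exact Function.Odd.integral_eq_zero fun v => by
      rw [oddExt_odd hℓ_even hℓ0 v, ha₀_even, neg_mul]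
  have hG_pos : ∀ V > 0, 0 < G V := fun V hV =>
    hG0 ▸ strictMono_of_deriv_pos (fun V => (hG V).deriv ▸ hg_pos V) hV
  have hF₀G : ∀ V, F₀ V = FS V + C * G V := fun V => by
    rw [hF₀, setIntegral_Iic_sub_setIntegral_Ici_eq_integral_oddExt
      (integrable_oddExt_comp_sub_mul hℓ_C1 hℓ0 hℓ_nonneg ha₀_cont ha₀_nonneg hdom V)]
  refine ⟨fun V => deriv FS V + C * g V, ?_, fun V _ => ?_, fun V hV => ⟨?_, ?_⟩⟩
  · exact ((hFS.continuous_deriv le_rfl).add ((continuous_integral_abs_deriv_comp_sub_mul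
      hℓ_C1 hℓ_nonneg ha₀_cont ha₀_nonneg hdom).const_mul C)).continuousOn
  · exact ((hFS.differentiable one_ne_zero V).hasDerivAt.add
      ((hG V).const_mul C)).congr_of_eventuallyEq (Eventually.of_forall hF₀G)
  · rw [hF₀G]
    linarith [hFS_nonneg V, mul_pos hC (hG_pos V hV)]
  · linarith [hFS_mono V, mul_pos hC (hg_pos V)]
end

section
/- Monotonicity of the body's velocity on the initial interval: let B₀ > 0, B∞ > 0, 0 < γ < 1, p ≥ 0, C > 0, suppose B₀ > γ^p and B₀ > C²·γ^p, and set t₀ = (1/(2B∞))·log(B₀/γ^p) > 0. Let Q, R : [0,∞) → ℝ be continuous with Q(t) ≥ B₀ and 0 ≤ R(t) ≤ C·γ^{p+1} for all t ≥ 0, and let y : [0,∞) → ℝ be differentiable with y′(t) = −Q(t)·y(t) + R(t) and y(t) ≥ γ·e^{−B∞·t} for all t ≥ 0. Then y′(t) < 0 for every t ∈ [0, t₀]. -/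
open Set Real

/-! On `[0, t₀]` we have `e^{-B∞ t} ≥ e^{-B∞ t₀} = √(γ^p / B₀)`, so the damping term satisfies
`Q y ≥ B₀ γ e^{-B∞ t} ≥ γ √(B₀ γ^p) > γ · C γ^p ≥ R`, the strict step being `B₀ > C² γ^p`. -/

theorem inv_le_exp_neg_mul_of_le_log_div {a b t : ℝ} (ha : 0 < a) (hb : 0 < b)
    (ht : t ≤ log a / b) : a⁻¹ ≤ exp (-(b * t)) := by
  rw [← exp_log (inv_pos.2 ha), log_inv, exp_le_exp, neg_le_neg_iff]
  exact (le_div_iff₀' hb).1 ht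

theorem mul_lt_of_sq_mul_lt {B C g x : ℝ} (hg : 0 < g) (hx : 0 ≤ x)
    (hCg : C ^ 2 * g < B) (hBg : B * g ≤ x ^ 2) : C * g < x :=
  calc C * g ≤ |C * g| := le_abs_self _
    _ < x := abs_lt_of_sq_lt_sq (by nlinarith) hx

theorem neg_mul_add_neg_of_lt_mul {B Q R m y : ℝ} (hB : 0 ≤ B) (hBQ : B ≤ Q)
    (hm : 0 ≤ m) (hmy : m ≤ y) (hR : R < B * m) : -Q * y + R < 0 := by
  nlinarith [mul_le_mul hBQ hmy hm (hB.trans hBQ)]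

theorem velocity_increasing_on_initial_interval_general
    (B₀ Binf γ p C t₀ : ℝ)
    (hB₀ : 0 < B₀) (hBinf : 0 < Binf) (hγ0 : 0 < γ)
    (h2 : C ^ 2 * γ ^ p < B₀)
    (ht₀ : t₀ = (1 / (2 * Binf)) * Real.log (B₀ / γ ^ p))
    (Q R y y' : ℝ → ℝ)
    (hQ : ∀ t ≥ (0:ℝ), B₀ ≤ Q t)
    (hR : ∀ t ≥ (0:ℝ), 0 ≤ R t ∧ R t ≤ C * γ ^ (p + 1))
    (hode : ∀ t ≥ (0:ℝ), y' t = -Q t * y t + R t)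
    (hlow : ∀ t ≥ (0:ℝ), γ * Real.exp (-Binf * t) ≤ y t) :
    ∀ t ∈ Icc (0:ℝ) t₀, y' t < 0 := by
  rintro t ⟨ht0, htt₀⟩
  have hγp : 0 < γ ^ p := rpow_pos_of_pos hγ0 p
  have hdecay : (B₀ / γ ^ p)⁻¹ ≤ exp (-(2 * Binf * t)) :=
    inv_le_exp_neg_mul_of_le_log_div (div_pos hB₀ hγp) (by positivity)
      (by rwa [ht₀, one_div_mul_eq_div] at htt₀)
  have hforce : C * γ ^ p < B₀ * exp (-Binf * t) := by
    refine mul_lt_of_sq_mul_lt hγp (by positivity) h2 ?_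
    rw [inv_div, div_le_iff₀ hB₀] at hdecay
    calc B₀ * γ ^ p ≤ B₀ * (exp (-(2 * Binf * t)) * B₀) :=
          mul_le_mul_of_nonneg_left hdecay hB₀.le
      _ = (B₀ * exp (-Binf * t)) ^ 2 := by rw [mul_pow, sq (exp _), ← exp_add]; ring_nf
  rw [hode t ht0]
  refine neg_mul_add_neg_of_lt_mul hB₀.le (hQ t ht0) (by positivity) (hlow t ht0) ?_
  calc R t ≤ C * γ ^ (p + 1) := (hR t ht0).2
    _ = γ * (C * γ ^ p) := by rw [rpow_add_one hγ0.ne']; ring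
    _ < γ * (B₀ * exp (-Binf * t)) := mul_lt_mul_of_pos_left hforce hγ0
    _ = B₀ * (γ * exp (-Binf * t)) := by ring

/-- Monotonicity of the body's velocity on the initial time interval: if
`y′ = −Q y + R` with `Q ≥ B₀`, `0 ≤ R ≤ Cγ^{p+1}`, `y ≥ γ e^{−B∞ t}`,
`B₀ > γ^p`, `B₀ > C²γ^p`, and `t₀ = (1/(2B∞)) log(B₀/γ^p)`, then `y′ < 0`
on `[0, t₀]`. -/
theorem velocity_increasing_on_initial_interval
    (B₀ Binf γ p C t₀ : ℝ)
    (hB₀ : 0 < B₀) (hBinf : 0 < Binf) (hγ0 : 0 < γ) (hγ1 : γ < 1)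
    (hp : 0 ≤ p) (hC : 0 < C)
    (h1 : γ ^ p < B₀) (h2 : C ^ 2 * γ ^ p < B₀)
    (ht₀ : t₀ = (1 / (2 * Binf)) * Real.log (B₀ / γ ^ p))
    (Q R y y' : ℝ → ℝ) (hQc : Continuous Q) (hRc : Continuous R)
    (hQ : ∀ t ≥ (0:ℝ), B₀ ≤ Q t)
    (hR : ∀ t ≥ (0:ℝ), 0 ≤ R t ∧ R t ≤ C * γ ^ (p + 1))
    (hy : ∀ t ≥ (0:ℝ), HasDerivAt y (y' t) t)
    (hode : ∀ t ≥ (0:ℝ), y' t = -Q t * y t + R t)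
    (hlow : ∀ t ≥ (0:ℝ), γ * Real.exp (-Binf * t) ≤ y t) :
    ∀ t ∈ Icc (0:ℝ) t₀, y' t < 0 :=
  velocity_increasing_on_initial_interval_general B₀ Binf γ p C t₀ hB₀ hBinf hγ0 h2 ht₀ Q R y y' hQ
    hR hode hlow
end

section
/- Lower decay bound via the differential inequality: let B∞ > 0 and γ > 0, let R : [0,∞) → [0,∞) be continuous, and let y : [0,∞) → ℝ be differentiable with y(0) = γ and y′(t) ≥ −B∞·y(t) + R(t) for all t ≥ 0. Then y(t) ≥ γ·e^{−B∞·t} for all t ≥ 0. If moreover there exist a > 0, m > 0 and t₀ > 0 with e^{−B∞·t₀} ≤ 1/2 and R(s) ≥ a·s^{−m} for all s ≥ t₀, then y(t) ≥ γ·e^{−B∞·t} + (a/(2·B∞))·t^{−m} for all t ≥ 2·t₀. -/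
/-!
Multiplying by the integrating factor `e^{B u}` makes `(y - c/B) e^{B u}` nondecreasing wherever
`y' ≥ -B y + c`, which gives `y t ≥ c/B + (y s - c/B) e^{-B (t - s)}`. With `c = 0` on `[0, t]` this is
the first bound. For the second, run the same comparison on the window `[t - t₀, t]`, where
`R ≥ a t^{-m}`: the homogeneous part carries `γ e^{-B t}` over from the first bound, and the forced
part contributes `(a t^{-m}/B)(1 - e^{-B t₀}) ≥ a t^{-m}/(2B)`.
-/

open Real Set

theorem le_of_linear_ode_ge {B c s t : ℝ} {y y' : ℝ → ℝ} (hB : B ≠ 0) (hst : s ≤ t)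
    (hy : ∀ u ∈ Icc s t, HasDerivAt y (y' u) u)
    (hode : ∀ u ∈ Icc s t, -B * y u + c ≤ y' u) :
    c / B + (y s - c / B) * exp (-B * (t - s)) ≤ y t := by
  set φ : ℝ → ℝ := fun u => (y u - c / B) * exp (B * u)
  have hφ : ∀ u ∈ Icc s t, HasDerivAt φ ((y' u + B * y u - c) * exp (B * u)) u := by
    intro u hu
    refine (((hy u hu).sub_const (c / B)).mul ((hasDerivAt_id u).const_mul B).exp).congr_deriv ?_
    simp only [id, mul_one]
    field_simp
    ring
  have hmono : MonotoneOn φ (Icc s t) := by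
    refine monotoneOn_of_hasDerivWithinAt_nonneg (convex_Icc s t)
      (fun u hu => (hφ u hu).continuousAt.continuousWithinAt)
      (fun u hu => (hφ u (interior_subset hu)).hasDerivWithinAt) fun u hu => ?_
    exact mul_nonneg (by linarith [hode u (interior_subset hu)]) (exp_pos _).le
  have hφst : φ s ≤ φ t := hmono (left_mem_Icc.2 hst) (right_mem_Icc.2 hst) hst
  have hexp : exp (-B * (t - s)) = exp (B * s) * exp (-(B * t)) := by
    rw [← exp_add]; ring_nf
  have hinv : exp (B * t) * exp (-(B * t)) = 1 := by rw [← exp_add]; simp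
  calc c / B + (y s - c / B) * exp (-B * (t - s))
      = c / B + φ s * exp (-(B * t)) := by rw [hexp]; ring
    _ ≤ c / B + φ t * exp (-(B * t)) := by gcongr
    _ = y t := by
      simp only [φ]
      linear_combination (y t - c / B) * hinv

theorem lower_decay_bound_general
    (Binf γ : ℝ) (hBinf : 0 < Binf)
    (R y y' : ℝ → ℝ) (hR0 : ∀ t ≥ (0:ℝ), 0 ≤ R t)
    (hy0 : y 0 = γ)
    (hy : ∀ t ≥ (0:ℝ), HasDerivAt y (y' t) t)
    (hode : ∀ t ≥ (0:ℝ), -Binf * y t + R t ≤ y' t) :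
    (∀ t ≥ (0:ℝ), γ * Real.exp (-Binf * t) ≤ y t) ∧
    ∀ a > (0:ℝ), ∀ m > (0:ℝ), ∀ t₀ > (0:ℝ),
      Real.exp (-Binf * t₀) ≤ 1 / 2 →
      (∀ s ≥ t₀, a * s ^ (-m) ≤ R s) →
      ∀ t ≥ 2 * t₀, γ * Real.exp (-Binf * t) + (a / (2 * Binf)) * t ^ (-m) ≤ y t := by
  have comparison (s t : ℝ) (c : ℝ) (hs : 0 ≤ s) (hst : s ≤ t) (hc : ∀ u ∈ Icc s t, c ≤ R u) :
      c / Binf + (y s - c / Binf) * exp (-Binf * (t - s)) ≤ y t :=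
    le_of_linear_ode_ge hBinf.ne' hst (fun u hu => hy u (hs.trans hu.1))
      fun u hu => (add_le_add_right (hc u hu) _).trans (hode u (hs.trans hu.1))
  have homogeneous (t : ℝ) (ht : 0 ≤ t) : γ * exp (-Binf * t) ≤ y t := by
    simpa [hy0] using comparison 0 t 0 le_rfl ht fun u hu => hR0 u hu.1
  refine ⟨homogeneous, fun a ha m hm t₀ ht₀ hhalf hRa t ht => ?_⟩
  have hforce : ∀ u ∈ Icc (t - t₀) t, a * t ^ (-m) ≤ R u := fun u hu =>
    have hu' : t₀ ≤ u := by linarith [hu.1]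
    (mul_le_mul_of_nonneg_left (rpow_le_rpow_of_nonpos (ht₀.trans_le hu') hu.2 (by linarith))
      ha.le).trans (hRa u hu')
  have hcB : 0 ≤ a * t ^ (-m) / Binf := by
    have : 0 < t := by linarith
    positivity
  have hprev := homogeneous (t - t₀) (by linarith)
  have hstep := comparison (t - t₀) t _ (by linarith) (by linarith) hforce
  rw [sub_sub_cancel] at hstep
  have hsplit : exp (-Binf * t) = exp (-Binf * (t - t₀)) * exp (-Binf * t₀) := by
    rw [← exp_add]; ring_nf
  calc γ * exp (-Binf * t) + a / (2 * Binf) * t ^ (-m)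
      = γ * exp (-Binf * (t - t₀)) * exp (-Binf * t₀) + a * t ^ (-m) / Binf * (1 / 2) := by
        rw [hsplit]; field_simp
    _ ≤ y (t - t₀) * exp (-Binf * t₀) + a * t ^ (-m) / Binf * (1 - exp (-Binf * t₀)) := by
        gcongr; linarith
    _ ≤ y t := by linarith

/-- Lower decay bound via the differential inequality: `y′ ≥ −B∞ y + R` with `R ≥ 0`
and `y(0) = γ` give `y(t) ≥ γ e^{−B∞ t}`; if moreover `R(s) ≥ a s^{−m}` for `s ≥ t₀`
and `e^{−B∞ t₀} ≤ 1/2`, then `y(t) ≥ γ e^{−B∞ t} + (a/(2B∞)) t^{−m}` for `t ≥ 2t₀`. -/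
theorem lower_decay_bound
    (Binf γ : ℝ) (hBinf : 0 < Binf) (hγ : 0 < γ)
    (R y y' : ℝ → ℝ) (hRc : Continuous R) (hR0 : ∀ t ≥ (0:ℝ), 0 ≤ R t)
    (hy0 : y 0 = γ)
    (hy : ∀ t ≥ (0:ℝ), HasDerivAt y (y' t) t)
    (hode : ∀ t ≥ (0:ℝ), -Binf * y t + R t ≤ y' t) :
    (∀ t ≥ (0:ℝ), γ * Real.exp (-Binf * t) ≤ y t) ∧
    ∀ a > (0:ℝ), ∀ m > (0:ℝ), ∀ t₀ > (0:ℝ),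
      Real.exp (-Binf * t₀) ≤ 1 / 2 →
      (∀ s ≥ t₀, a * s ^ (-m) ≤ R s) →
      ∀ t ≥ 2 * t₀, γ * Real.exp (-Binf * t) + (a / (2 * Binf)) * t ^ (-m) ≤ y t :=
  lower_decay_bound_general Binf γ hBinf R y y' hR0 hy0 hy hode
end

section
/- Choice of the envelope functions g and h: let d ≥ 1 be real, 0 < p ≤ 2, 0 < B₀ ≤ B∞, and C > 0, C′ > 0. Set M = d + p, q = 1/((d+p)·p), and H = (1 − e^{−B∞})/B∞. Then there exist constants A₊ > 0, A₋ > 0, G > 0 and γ* > 0 such that for every γ ∈ (0, γ*), setting t₀ = (1/(2B∞))·log(B₀/γ^p), g(t) = e^{−B₀·t} + γ^p·A₊·(1 + t)^{−(d+p)} and h(t) = e^{−B∞·t} + γ^p·A₋·t^{−(d+p)}·1_{(2t₀,∞)}(t), the following all hold: (a) γ·e^{−B₀·t} + C·γ^{p+1}·G^{p+1}·(1 + t)^{−(d+p)} < γ·g(t) for all t ≥ 0; (b) γ·e^{−B∞·t} + C′·γ^{p+1}·H^{p+1}·t^{−(d+p)}·1_{(2t₀,∞)}(t) ≥ γ·h(t)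 for all t > 0; (c) 2·t₀ ≥ max((2G/H)^{1/(M−1)}, 16^q·(2^M·G/H)^{q(p+1)}); (d) g(t) ≤ G·(1 + t)^{−M} for all t ≥ 0; and (e) ∫₀¹ h(s) ds = H. -/
/-!
All five conditions come from explicit choices. `A₋ = C' H^{p+1}` makes (b) an equality and
`A₊ = C G^{p+1} + 1` gives (a) with room `γ^{p+1}(1+t)^{-(d+p)}`. Since `e^{-B₀t}` decays faster
than any power, `e^{-B₀t} ≤ K (1+t)^{-(d+p)}` for some `K`, and `G = K + 1` gives (d) once
`γ^p A₊ ≤ 1`. Finally `2t₀ = log(B₀/γ^p)/B∞ → ∞` as `γ → 0`, so for small `γ` it exceeds both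
the threshold in (c) and `1`; the latter makes the indicator in `h` vanish on `[0, 1]`, which
gives (e).
-/

open Real Set intervalIntegral

-- `K = n! e^B / B^n` with `n = ⌈m⌉₊`, from `(B(1+t))ⁿ/n! ≤ e^{B(1+t)}`.
lemma exists_exp_neg_mul_le_mul_one_add_rpow_neg {B : ℝ} (hB : 0 < B) (m : ℝ) :
    ∃ K > 0, ∀ t ≥ (0:ℝ), exp (-B * t) ≤ K * (1 + t) ^ (-m) := by
  set n := ⌈m⌉₊
  refine ⟨n.factorial * exp B / B ^ n, by positivity, fun t ht => ?_⟩
  have h1t : (1:ℝ) ≤ 1 + t := by linarith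
  have hpow : (1 + t) ^ m ≤ (1 + t) ^ n := by
    simpa using rpow_le_rpow_of_exponent_le h1t (Nat.le_ceil m)
  have hexp : (B * (1 + t)) ^ n ≤ n.factorial * (exp B * exp (B * t)) := by
    rw [← exp_add, ← div_le_iff₀' (by positivity)]
    simpa [mul_add] using pow_div_factorial_le_exp (B * (1 + t)) (by positivity) n
  rw [rpow_neg (by linarith), ← div_eq_mul_inv, le_div_iff₀ (by positivity)]
  calc exp (-B * t) * (1 + t) ^ m ≤ exp (-B * t) * (1 + t) ^ n := by gcongr
    _ ≤ exp (-B * t) * (n.factorial * (exp B * exp (B * t)) / B ^ n) := by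
        gcongr
        rw [le_div_iff₀' (by positivity), ← mul_pow]
        exact hexp
    _ = n.factorial * exp B / B ^ n * (exp (-B * t) * exp (B * t)) := by ring
    _ = n.factorial * exp B / B ^ n := by simp [← exp_add]

lemma exists_pos_forall_rpow_lt {p c : ℝ} (hp : 0 < p) (hc : 0 < c) :
    ∃ δ > 0, ∀ γ, 0 < γ → γ < δ → γ ^ p < c :=
  ⟨c ^ p⁻¹, rpow_pos_of_pos hc _,
    fun _ hγ hδ => (lt_rpow_inv_iff_of_pos hγ.le hc.le hp).1 hδ⟩

lemma le_log_div_of_lt_mul_exp_neg {a b x T : ℝ} (hb : 0 < b) (hx : 0 < x)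
    (h : x < a * exp (-(b * T))) : T ≤ log (a / x) / b := by
  have ha : 0 < a := pos_of_mul_pos_left (hx.trans h) (exp_pos _).le
  rw [le_div_iff₀ hb, le_log_iff_exp_le (by positivity), le_div_iff₀ hx]
  rw [exp_neg, ← div_eq_mul_inv, lt_div_iff₀ (exp_pos _)] at h
  rw [mul_comm T b, mul_comm]
  exact h.le

lemma integral_exp_neg_mul_zero_one {B : ℝ} (hB : B ≠ 0) :
    ∫ s in (0:ℝ)..1, exp (-B * s) = (1 - exp (-B)) / B := by
  rw [integral_comp_mul_left exp (neg_ne_zero.2 hB), integral_exp]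
  simp only [smul_eq_mul, mul_one, mul_zero, exp_zero]
  field_simp
  ring

lemma integral_zero_one_add_mul_indicator_Ioi {f k : ℝ → ℝ} {a : ℝ} (ha : 1 ≤ a) :
    ∫ s in (0:ℝ)..1, (f s + k s * (Ioi a).indicator (fun _ => (1:ℝ)) s)
      = ∫ s in (0:ℝ)..1, f s := by
  refine integral_congr fun s hs => ?_
  rw [uIcc_of_le zero_le_one] at hs
  simp [hs.2.trans ha]

theorem choice_of_envelopes_general
    (d p B₀ Binf C C' : ℝ) (hp0 : 0 < p)
    (hB₀ : 0 < B₀) (hBB : B₀ ≤ Binf) (hC : 0 < C) (hC' : 0 < C') :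
    ∃ Ap > (0:ℝ), ∃ Am > (0:ℝ), ∃ G > (0:ℝ), ∃ γs > (0:ℝ),
      ∀ γ : ℝ, 0 < γ → γ < γs →
        ∀ M q H t₀ : ℝ, ∀ g h : ℝ → ℝ,
          M = d + p →
          q = 1 / ((d + p) * p) →
          H = (1 - Real.exp (-Binf)) / Binf →
          t₀ = (1 / (2 * Binf)) * Real.log (B₀ / γ ^ p) →
          g = (fun t => Real.exp (-B₀ * t) + γ ^ p * Ap * (1 + t) ^ (-(d + p))) →
          h = (fun t => Real.exp (-Binf * t)
                + γ ^ p * Am * t ^ (-(d + p)) *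
                    Set.indicator (Set.Ioi (2 * t₀)) (fun _ => (1:ℝ)) t) →
          (∀ t ≥ (0:ℝ),
            γ * Real.exp (-B₀ * t)
              + C * γ ^ (p + 1) * G ^ (p + 1) * (1 + t) ^ (-(d + p)) < γ * g t) ∧
          (∀ t > (0:ℝ),
            γ * h t ≤ γ * Real.exp (-Binf * t)
              + C' * γ ^ (p + 1) * H ^ (p + 1) * t ^ (-(d + p)) *
                  Set.indicator (Set.Ioi (2 * t₀)) (fun _ => (1:ℝ)) t) ∧
          (max ((2 * G / H) ^ (1 / (M - 1)))
              ((16:ℝ) ^ q * (2 ^ M * G / H) ^ (q * (p + 1))) ≤ 2 * t₀) ∧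
          (∀ t ≥ (0:ℝ), g t ≤ G * (1 + t) ^ (-M)) ∧
          (∫ s in (0:ℝ)..1, h s) = H := by
  have hBinf : 0 < Binf := hB₀.trans_le hBB
  set H := (1 - exp (-Binf)) / Binf
  have hH : 0 < H := div_pos (by simp [hBinf]) hBinf
  obtain ⟨K, hK, hdecay⟩ := exists_exp_neg_mul_le_mul_one_add_rpow_neg hB₀ (d + p)
  set G := K + 1
  set Ap := C * G ^ (p + 1) + 1
  set T := max (max ((2 * G / H) ^ (1 / (d + p - 1)))
    ((16:ℝ) ^ (1 / ((d + p) * p)) * (2 ^ (d + p) * G / H) ^ (1 / ((d + p) * p) * (p + 1)))) 1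
  obtain ⟨γs, hγs, hsmall⟩ :=
    exists_pos_forall_rpow_lt hp0 (c := min (1 / Ap) (B₀ * exp (-(Binf * T))))
      (by positivity)
  refine ⟨Ap, by positivity, C' * H ^ (p + 1), by positivity, G, by positivity, γs, hγs, ?_⟩
  rintro γ hγ hγγs M q _ t₀ g h rfl rfl rfl rfl rfl rfl
  have hγp : 0 < γ ^ p := rpow_pos_of_pos hγ p
  have hAp : γ ^ p * Ap ≤ 1 :=
    (le_div_iff₀ (by positivity)).1 ((hsmall γ hγ hγγs).le.trans (min_le_left _ _))
  have hT : T ≤ 2 * (1 / (2 * Binf) * log (B₀ / γ ^ p)) := by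
    convert le_log_div_of_lt_mul_exp_neg hBinf hγp
      ((hsmall γ hγ hγγs).trans_le (min_le_right _ _)) using 1
    field_simp
  have hγ_succ : γ ^ (p + 1) = γ ^ p * γ := rpow_add_one hγ.ne' p
  refine ⟨fun t ht => ?_, fun t _ => ?_, (le_max_left _ _).trans hT, fun t ht => ?_, ?_⟩
  · have hroom : 0 < γ ^ p * γ * (1 + t) ^ (-(d + p)) := by positivity
    dsimp only [Ap]
    rw [hγ_succ]
    linarith
  · exact le_of_eq (by rw [hγ_succ]; ring)
  · have := mul_le_mul_of_nonneg_right hAp (by positivity : (0:ℝ) ≤ (1 + t) ^ (-(d + p)))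
    dsimp only
    linarith [hdecay t ht]
  · rw [integral_zero_one_add_mul_indicator_Ioi ((le_max_right _ _).trans hT),
      integral_exp_neg_mul_zero_one hBinf.ne']

/-- Choice of the envelope functions `g` and `h`: with `M = d + p`,
`q = 1/((d+p)p)` and `H = (1 − e^{−B∞})/B∞`, there are constants
`A₊, A₋, G, γ* > 0` such that for every `0 < γ < γ*`, the functions
`g(t) = e^{−B₀t} + γ^p A₊ (1+t)^{−(d+p)}` and
`h(t) = e^{−B∞t} + γ^p A₋ t^{−(d+p)} 1_{(2t₀,∞)}(t)`, with
`t₀ = (1/(2B∞)) log(B₀/γ^p)`, satisfy conditions (a)–(e). -/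
theorem choice_of_envelopes
    (d p B₀ Binf C C' : ℝ) (hd : 1 ≤ d) (hp0 : 0 < p) (hp2 : p ≤ 2)
    (hB₀ : 0 < B₀) (hBB : B₀ ≤ Binf) (hC : 0 < C) (hC' : 0 < C') :
    ∃ Ap > (0:ℝ), ∃ Am > (0:ℝ), ∃ G > (0:ℝ), ∃ γs > (0:ℝ),
      ∀ γ : ℝ, 0 < γ → γ < γs →
        ∀ M q H t₀ : ℝ, ∀ g h : ℝ → ℝ,
          M = d + p →
          q = 1 / ((d + p) * p) →
          H = (1 - Real.exp (-Binf)) / Binf →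
          t₀ = (1 / (2 * Binf)) * Real.log (B₀ / γ ^ p) →
          g = (fun t => Real.exp (-B₀ * t) + γ ^ p * Ap * (1 + t) ^ (-(d + p))) →
          h = (fun t => Real.exp (-Binf * t)
                + γ ^ p * Am * t ^ (-(d + p)) *
                    Set.indicator (Set.Ioi (2 * t₀)) (fun _ => (1:ℝ)) t) →
          (∀ t ≥ (0:ℝ),
            γ * Real.exp (-B₀ * t)
              + C * γ ^ (p + 1) * G ^ (p + 1) * (1 + t) ^ (-(d + p)) < γ * g t) ∧
          (∀ t > (0:ℝ),
            γ * h t ≤ γ * Real.exp (-Binf * t)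
              + C' * γ ^ (p + 1) * H ^ (p + 1) * t ^ (-(d + p)) *
                  Set.indicator (Set.Ioi (2 * t₀)) (fun _ => (1:ℝ)) t) ∧
          (max ((2 * G / H) ^ (1 / (M - 1)))
              ((16:ℝ) ^ q * (2 ^ M * G / H) ^ (q * (p + 1))) ≤ 2 * t₀) ∧
          (∀ t ≥ (0:ℝ), g t ≤ G * (1 + t) ^ (-M)) ∧
          (∫ s in (0:ℝ)..1, h s) = H :=
  choice_of_envelopes_general d p B₀ Binf C C' hp0 hB₀ hBB hC hC'
end
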